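/- arXiv:1110.5118 — 9 statements merged into one kernel-verified Lean document; each statement's English description precedes it below -/
import Mathlib

section
/- Let Γ be a weighted forest (a finite acyclic graph with integer weights a_v on vertices), and let Q(Γ) be the matrix with Q_{ii} = -a_i, Q_{ij} = -1 if vertices i and j are adjacent, and 0 otherwise. Then det Q(Γ) = Σ_{S} (-1)^{|S|} · Π_{v ∉ Supp(S)} (-a_v), where the sum is over all matchings S of Γ (sets of pairwise disjoint edges) and Supp(S) is the set of endpoints of edges in S. -/
open Classical Finset

/-- The matrix `Q(Γ)` of a weighted graph: `-a i` on the diagonal, `-1` for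
adjacent vertices, `0` otherwise. -/
noncomputable def wMatrix {V : Type*} [Fintype V] (G : SimpleGraph V) (a : V → ℤ) :
    Matrix V V ℤ :=
  Matrix.of fun i j => if i = j then -a i else if G.Adj i j then (-1 : ℤ) else 0

/-- The determinant `d(Γ)` of a weighted graph. -/
noncomputable def wDet {V : Type*} [Fintype V] (G : SimpleGraph V) (a : V → ℤ) : ℤ :=
  (wMatrix G a).det

/-- The determinant of the weighted graph obtained by deleting a set `s` of
vertices (and all incident edges). -/
noncomputable def wDetDel {V : Type*} [Fintype V] (G : SimpleGraph V) (a : V → ℤ)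
    (s : Set V) : ℤ :=
  wDet (SimpleGraph.comap (Subtype.val : {v // v ∉ s} → V) G) (fun v => a v.1)

/-!
Expand `det Q` over permutations `σ`. A term vanishes unless every vertex is fixed by `σ` or sent
to a neighbour; in a forest such a `σ` is an involution, because an orbit of length at least three
would trace a cycle in the graph. These involutions are exactly the matchings `S`, with `σ`
swapping the ends of each edge of `S`: the sign of `σ` is `(-1) ^ |S|`, each edge contributes
`(-1) * (-1) = 1` to the product of entries, and each unmatched vertex contributes `-a v`.
-/

namespace SimpleGraph

variable {V : Type*} {G : SimpleGraph V}

def IsEdgePerm (G : SimpleGraph V) (σ : Equiv.Perm V) : Prop :=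
  ∀ v, σ v = v ∨ G.Adj v (σ v)

def walkOfAdj (f : ℕ → V) (hf : ∀ i, G.Adj (f i) (f (i + 1))) :
    (n : ℕ) → G.Walk (f 0) (f n)
  | 0 => Walk.nil
  | n + 1 => (walkOfAdj f hf n).concat (hf n)

theorem support_walkOfAdj (f : ℕ → V) (hf : ∀ i, G.Adj (f i) (f (i + 1))) (n : ℕ) :
    (walkOfAdj f hf n).support = (List.range (n + 1)).map f := by
  induction n with
  | zero => rfl
  | succ n ih =>
    rw [walkOfAdj, Walk.support_concat, ih, List.range_succ (n := n + 1), List.map_append,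
      List.map_singleton]

theorem length_walkOfAdj (f : ℕ → V) (hf : ∀ i, G.Adj (f i) (f (i + 1))) (n : ℕ) :
    (walkOfAdj f hf n).length = n := by
  induction n with
  | zero => rfl
  | succ n ih => rw [walkOfAdj, Walk.length_concat, ih]

theorem IsAcyclic.le_two_of_injOn (hG : G.IsAcyclic) {f : ℕ → V}
    (hf : ∀ i, G.Adj (f i) (f (i + 1))) {n : ℕ} (hinj : Set.InjOn f (Set.Iio n))
    (hn : f n = f 0) : n ≤ 2 := by
  obtain _ | m := n
  · omega
  have hpath : (walkOfAdj f hf m).IsPath := by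
    rw [Walk.isPath_def, support_walkOfAdj]
    exact List.nodup_range.map_on fun i hi j hj hij =>
      hinj (List.mem_range.1 hi) (List.mem_range.1 hj) hij
  have hlast : G.Adj (f 0) (f m) := hn ▸ (hf m).symm
  have hlen := congrArg (fun p : G.Path _ _ => p.1.length)
    ((hG.subsingleton_path _ _).elim ⟨_, hpath⟩ (Path.singleton hlast))
  simp only [length_walkOfAdj, Path.singleton_coe, Walk.length_cons, Walk.length_nil] at hlen
  omega

theorem IsAcyclic.involutive_of_isEdgePerm [Finite V] (hG : G.IsAcyclic) {σ : Equiv.Perm V}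
    (hσ : G.IsEdgePerm σ) : Function.Involutive σ := by
  intro v
  by_contra hv
  have hmoved : ∀ i, σ (σ^[i] v) ≠ σ^[i] v := by
    intro i h
    rw [← Function.iterate_succ_apply' σ, Function.iterate_succ_apply] at h
    exact hv (by rw [σ.injective.iterate i h, σ.injective.iterate i h])
  have hadj : ∀ i, G.Adj (σ^[i] v) (σ^[i + 1] v) := fun i => by
    rw [Function.iterate_succ_apply']
    exact (hσ _).resolve_left (hmoved i)
  have hle := hG.le_two_of_injOn hadj Function.iterate_injOn_Iio_minimalPeriod
    Function.iterate_minimalPeriod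
  have hpos := Function.minimalPeriod_pos_of_mem_periodicPts (σ.injective.mem_periodicPts v)
  have hper : σ^[Function.minimalPeriod σ v] v = v := Function.iterate_minimalPeriod
  interval_cases Function.minimalPeriod σ v
  · exact hmoved 0 hper
  · exact hv hper

end SimpleGraph

section Matching

variable {V : Type*}

def IsMatching (S : Finset (Sym2 V)) : Prop :=
  ∀ e ∈ S, ∀ f ∈ S, e ≠ f → ∀ v : V, v ∈ e → v ∉ f

noncomputable def matchingPartner (S : Finset (Sym2 V)) (v : V) : V :=
  if h : ∃ e ∈ S, v ∈ e then Sym2.Mem.other h.choose_spec.2 else v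

variable {S : Finset (Sym2 V)} {e : Sym2 V} {u v w : V}

theorem IsMatching.mono {T : Finset (Sym2 V)} (hT : IsMatching T) (hST : S ⊆ T) :
    IsMatching S := fun e he f hf => hT e (hST he) f (hST hf)

theorem IsMatching.eq_of_mem (hS : IsMatching S) {f : Sym2 V} (he : e ∈ S) (hf : f ∈ S)
    (hve : v ∈ e) (hvf : v ∈ f) : e = f := by
  by_contra hef
  exact hS e he f hf hef v hve hvf

theorem matchingPartner_of_forall_not_mem (h : ∀ e ∈ S, v ∉ e) : matchingPartner S v = v :=
  dif_neg fun ⟨e, he, hv⟩ => h e he hv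

theorem IsMatching.matchingPartner_eq (hS : IsMatching S) (h : s(v, w) ∈ S) :
    matchingPartner S v = w := by
  have hex : ∃ e ∈ S, v ∈ e := ⟨_, h, Sym2.mem_mk_left v w⟩
  rw [matchingPartner, dif_pos hex, ← Sym2.congr_right (a := v), Sym2.other_spec,
    hS.eq_of_mem hex.choose_spec.1 h hex.choose_spec.2 (Sym2.mem_mk_left v w)]

theorem IsMatching.mk_matchingPartner (hS : IsMatching S) (he : e ∈ S) (hv : v ∈ e) :
    s(v, matchingPartner S v) = e := by
  have hother := Sym2.other_spec hv
  rw [hS.matchingPartner_eq (hother.symm ▸ he), hother]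

theorem IsMatching.matchingPartner_involutive (hS : IsMatching S) :
    Function.Involutive (matchingPartner S) := by
  intro v
  by_cases h : ∃ e ∈ S, v ∈ e
  · obtain ⟨e, he, hv⟩ := h
    exact hS.matchingPartner_eq (Sym2.eq_swap ▸ (hS.mk_matchingPartner he hv).symm ▸ he)
  · push Not at h
    rw [matchingPartner_of_forall_not_mem h, matchingPartner_of_forall_not_mem h]

theorem IsMatching.matchingPartner_eq_self_iff (hS : IsMatching S)
    (hdiag : ∀ e ∈ S, ¬ e.IsDiag) : matchingPartner S v = v ↔ ∀ e ∈ S, v ∉ e := by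
  refine ⟨fun h e he hv => hdiag e he ?_, matchingPartner_of_forall_not_mem⟩
  rw [← hS.mk_matchingPartner he hv, h]
  exact Sym2.mk_isDiag_iff.mpr rfl

theorem IsMatching.forall_not_mem_of_mem_insert (hS : IsMatching (insert e S)) (he : e ∉ S)
    (hv : v ∈ e) : ∀ f ∈ S, v ∉ f := fun _ hf hvf =>
  he (hS.eq_of_mem (mem_insert_self e S) (mem_insert_of_mem hf) hv hvf ▸ hf)

theorem IsMatching.matchingPartner_insert (hS : IsMatching (insert e S)) (hv : v ∉ e) :
    matchingPartner (insert e S) v = matchingPartner S v := by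
  by_cases h : ∃ f ∈ S, v ∈ f
  · obtain ⟨f, hf, hvf⟩ := h
    exact hS.matchingPartner_eq
      (mem_insert_of_mem ((hS.mono (subset_insert e S)).mk_matchingPartner hf hvf ▸ hf))
  · push Not at h
    rw [matchingPartner_of_forall_not_mem h, matchingPartner_of_forall_not_mem]
    rintro _ hf hvf
    obtain rfl | hf := mem_insert.1 hf
    exacts [hv hvf, h _ hf hvf]

noncomputable def IsMatching.toPerm (hS : IsMatching S) : Equiv.Perm V :=
  hS.matchingPartner_involutive.toPerm _

@[simp]
theorem IsMatching.toPerm_apply (hS : IsMatching S) (v : V) :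
    hS.toPerm v = matchingPartner S v := rfl

theorem IsMatching.toPerm_insert (hS : IsMatching (insert s(u, w) S)) (he : s(u, w) ∉ S) :
    hS.toPerm = Equiv.swap u w * (hS.mono (subset_insert _ S)).toPerm := by
  have hu := matchingPartner_of_forall_not_mem
    (hS.forall_not_mem_of_mem_insert he (Sym2.mem_mk_left u w))
  have hw := matchingPartner_of_forall_not_mem
    (hS.forall_not_mem_of_mem_insert he (Sym2.mem_mk_right u w))
  have hSinv := (hS.mono (subset_insert _ S)).matchingPartner_involutive
  ext v
  simp only [Equiv.Perm.mul_apply, IsMatching.toPerm_apply]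
  by_cases hvu : v = u
  · subst hvu
    rw [hS.matchingPartner_eq (mem_insert_self _ S), hu, Equiv.swap_apply_left]
  by_cases hvw : v = w
  · subst hvw
    rw [hS.matchingPartner_eq (mem_insert.2 (Or.inl Sym2.eq_swap)), hw, Equiv.swap_apply_right]
  have hvuw : v ∉ s(u, w) := by simp [hvu, hvw]
  have hnu : matchingPartner S v ≠ u := fun h => hvu (by rw [← hSinv v, h, hu])
  have hnw : matchingPartner S v ≠ w := fun h => hvw (by rw [← hSinv v, h, hw])
  rw [hS.matchingPartner_insert hvuw, Equiv.swap_apply_of_ne_of_ne hnu hnw]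

section Perm

variable [Fintype V] {σ : Equiv.Perm V}

theorem IsMatching.sign_toPerm (hS : IsMatching S) (hdiag : ∀ e ∈ S, ¬ e.IsDiag) :
    Equiv.Perm.sign hS.toPerm = (-1) ^ S.card := by
  induction S using Finset.induction_on with
  | empty =>
    have h1 : hS.toPerm = 1 :=
      Equiv.ext fun _ => matchingPartner_of_forall_not_mem fun _ h => absurd h (notMem_empty _)
    rw [h1, Equiv.Perm.sign_one, card_empty, pow_zero]
  | insert e S he ih =>
    induction e using Sym2.ind with
    | _ u w =>
    have huw : u ≠ w := fun h => hdiag _ (mem_insert_self _ S) (Sym2.mk_isDiag_iff.mpr h)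
    rw [hS.toPerm_insert he, Equiv.Perm.sign_mul, Equiv.Perm.sign_swap huw,
      ih _ fun f hf => hdiag f (mem_insert_of_mem hf), card_insert_of_notMem he, pow_succ']

noncomputable def edgesOfPerm (σ : Equiv.Perm V) : Finset (Sym2 V) :=
  ({v | σ v ≠ v} : Finset V).image fun v => s(v, σ v)

theorem mem_edgesOfPerm : e ∈ edgesOfPerm σ ↔ ∃ v, σ v ≠ v ∧ s(v, σ v) = e := by
  simp [edgesOfPerm]

theorem not_isDiag_of_mem_edgesOfPerm (he : e ∈ edgesOfPerm σ) : ¬ e.IsDiag := by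
  obtain ⟨v, hv, rfl⟩ := mem_edgesOfPerm.1 he
  exact fun h => hv (Sym2.mk_isDiag_iff.1 h).symm

theorem eq_of_mem_edgesOfPerm (hσ : Function.Involutive σ) (he : e ∈ edgesOfPerm σ)
    (hv : v ∈ e) : e = s(v, σ v) := by
  obtain ⟨x, -, rfl⟩ := mem_edgesOfPerm.1 he
  rcases Sym2.mem_iff.1 hv with rfl | rfl
  · rfl
  · rw [hσ x, Sym2.eq_swap]

theorem isMatching_edgesOfPerm (hσ : Function.Involutive σ) : IsMatching (edgesOfPerm σ) :=
  fun _ he _ hf hef _ hve hvf =>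
    hef ((eq_of_mem_edgesOfPerm hσ he hve).trans (eq_of_mem_edgesOfPerm hσ hf hvf).symm)

theorem forall_not_mem_edgesOfPerm_iff (hσ : Function.Involutive σ) :
    (∀ e ∈ edgesOfPerm σ, v ∉ e) ↔ σ v = v := by
  refine ⟨fun h => ?_, fun h e he hv => not_isDiag_of_mem_edgesOfPerm he ?_⟩
  · by_contra hv
    exact h _ (mem_edgesOfPerm.2 ⟨v, hv, rfl⟩) (Sym2.mem_mk_left _ _)
  · rw [eq_of_mem_edgesOfPerm hσ he hv, h]
    exact Sym2.mk_isDiag_iff.mpr rfl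

theorem toPerm_edgesOfPerm (hσ : Function.Involutive σ) :
    (isMatching_edgesOfPerm hσ).toPerm = σ := by
  ext v
  rw [IsMatching.toPerm_apply]
  by_cases hv : σ v = v
  · rw [matchingPartner_of_forall_not_mem ((forall_not_mem_edgesOfPerm_iff hσ).2 hv), hv]
  · exact (isMatching_edgesOfPerm hσ).matchingPartner_eq (mem_edgesOfPerm.2 ⟨v, hv, rfl⟩)

theorem edgesOfPerm_toPerm (hS : IsMatching S) (hdiag : ∀ e ∈ S, ¬ e.IsDiag) :
    edgesOfPerm hS.toPerm = S := by
  ext e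
  simp only [mem_edgesOfPerm, IsMatching.toPerm_apply, ne_eq,
    hS.matchingPartner_eq_self_iff hdiag, not_forall, not_not]
  constructor
  · rintro ⟨v, ⟨f, hf, hvf⟩, rfl⟩
    rwa [hS.mk_matchingPartner hf hvf]
  · intro he
    induction e using Sym2.ind with
    | _ u w =>
      have hu := Sym2.mem_mk_left u w
      exact ⟨u, ⟨_, he, hu⟩, hS.mk_matchingPartner he hu⟩

theorem IsMatching.isEdgePerm_toPerm {G : SimpleGraph V} (hS : IsMatching S)
    (hSG : S ⊆ G.edgeFinset) : G.IsEdgePerm hS.toPerm := by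
  intro v
  rw [IsMatching.toPerm_apply]
  by_cases h : ∀ e ∈ S, v ∉ e
  · exact Or.inl (matchingPartner_of_forall_not_mem h)
  · push Not at h
    obtain ⟨e, he, hv⟩ := h
    right
    rw [← SimpleGraph.mem_edgeSet, hS.mk_matchingPartner he hv]
    exact SimpleGraph.mem_edgeFinset.1 (hSG he)

theorem edgesOfPerm_subset_edgeFinset {G : SimpleGraph V} (hσ : G.IsEdgePerm σ) :
    edgesOfPerm σ ⊆ G.edgeFinset := fun e he => by
  obtain ⟨v, hv, rfl⟩ := mem_edgesOfPerm.1 he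
  exact SimpleGraph.mem_edgeFinset.2 ((hσ v).resolve_left hv)

theorem sign_eq_neg_one_pow_card_edgesOfPerm (hσ : Function.Involutive σ) :
    Equiv.Perm.sign σ = (-1) ^ (edgesOfPerm σ).card := by
  have h := (isMatching_edgesOfPerm hσ).sign_toPerm fun _ => not_isDiag_of_mem_edgesOfPerm
  rwa [toPerm_edgesOfPerm hσ] at h

end Perm

end Matching

section WeightedGraph

variable {V : Type*} [Fintype V] {G : SimpleGraph V} {a : V → ℤ}

theorem wMatrix_self (G : SimpleGraph V) (a : V → ℤ) (v : V) : wMatrix G a v v = -a v := by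
  simp [wMatrix]

theorem wMatrix_of_adj {u v : V} (h : G.Adj u v) : wMatrix G a u v = -1 := by
  simp [wMatrix, h, h.ne]

theorem wMatrix_of_not_adj {u v : V} (hne : u ≠ v) (h : ¬ G.Adj u v) : wMatrix G a u v = 0 := by
  simp [wMatrix, h, hne]

theorem wDet_eq_sum_perm (G : SimpleGraph V) (a : V → ℤ) :
    wDet G a = ∑ σ ∈ univ.filter (fun σ : Equiv.Perm V => G.IsEdgePerm σ),
      (Equiv.Perm.sign σ : ℤ) * ∏ v, wMatrix G a (σ v) v := by
  rw [wDet, Matrix.det_apply']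
  refine (sum_subset (filter_subset _ _) fun σ _ hσ => ?_).symm
  obtain ⟨v, hv, hadj⟩ : ∃ v, σ v ≠ v ∧ ¬ G.Adj v (σ v) := by
    simpa [SimpleGraph.IsEdgePerm] using fun h => hσ (mem_filter.2 ⟨mem_univ σ, h⟩)
  exact mul_eq_zero_of_right _
    (prod_eq_zero (mem_univ v) (wMatrix_of_not_adj hv fun h => hadj h.symm))

theorem prod_wMatrix_of_involutive {σ : Equiv.Perm V} (hinv : Function.Involutive σ)
    (hσ : G.IsEdgePerm σ) :
    ∏ v, wMatrix G a (σ v) v = ∏ v ∈ univ.filter (fun v => σ v = v), (-a v) := by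
  have hmoved : ∀ v, σ v ≠ v → wMatrix G a (σ v) v = -1 := fun v hv =>
    wMatrix_of_adj ((hσ v).resolve_left hv).symm
  rw [← prod_filter_mul_prod_filter_not univ (fun v => σ v = v)]
  have hfixed : ∏ v ∈ univ.filter (fun v => σ v = v), wMatrix G a (σ v) v =
      ∏ v ∈ univ.filter (fun v => σ v = v), (-a v) :=
    prod_congr rfl fun v hv => by rw [(mem_filter.1 hv).2, wMatrix_self]
  have hpairs : ∏ v ∈ univ.filter (fun v => σ v ≠ v), wMatrix G a (σ v) v = 1 := by
    refine prod_involution (fun v _ => σ v) (fun v hv => ?_) (fun v hv _ => (mem_filter.1 hv).2)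
      (fun v hv => ?_) (fun v _ => hinv v)
    · have hv' := (mem_filter.1 hv).2
      rw [hmoved v hv', hmoved (σ v) (by rw [hinv]; exact hv'.symm), neg_one_mul, neg_neg]
    · simpa [hinv v] using (mem_filter.1 hv).2.symm
  rw [hfixed, hpairs, mul_one]

theorem sign_mul_prod_wMatrix {σ : Equiv.Perm V} (hinv : Function.Involutive σ)
    (hσ : G.IsEdgePerm σ) :
    (Equiv.Perm.sign σ : ℤ) * ∏ v, wMatrix G a (σ v) v =
      (-1) ^ (edgesOfPerm σ).card *
        ∏ v ∈ univ.filter (fun v => ∀ e ∈ edgesOfPerm σ, v ∉ e), (-a v) := by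
  rw [sign_eq_neg_one_pow_card_edgesOfPerm hinv, prod_wMatrix_of_involutive hinv hσ,
    filter_congr fun v _ => forall_not_mem_edgesOfPerm_iff hinv]
  push_cast
  rfl

end WeightedGraph

/-- Lemma 5.1: the determinant of a weighted forest is a sum over matchings. -/
theorem forest_det_matching_expansion {V : Type*} [Fintype V] [DecidableEq V]
    (G : SimpleGraph V) (hG : G.IsAcyclic) (a : V → ℤ) :
    wDet G a =
      ∑ S ∈ G.edgeFinset.powerset.filter
          (fun S => ∀ e ∈ S, ∀ f ∈ S, e ≠ f → ∀ v : V, v ∈ e → v ∉ f),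
        (-1 : ℤ) ^ S.card *
          ∏ v ∈ Finset.univ.filter (fun v : V => ∀ e ∈ S, v ∉ e), (-a v) := by
  -- `wDet` is computed with the classical `DecidableEq V` instance
  obtain rfl : ‹DecidableEq V› = fun _ _ => Classical.propDecidable _ := Subsingleton.elim _ _
  have hdiag : ∀ S ⊆ G.edgeFinset, ∀ e ∈ S, ¬ e.IsDiag := fun S hS e he =>
    G.not_isDiag_of_mem_edgeSet (SimpleGraph.mem_edgeFinset.1 (hS he))
  rw [wDet_eq_sum_perm]
  refine sum_bij' (fun σ _ => edgesOfPerm σ)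
    (fun S hS => IsMatching.toPerm (S := S) (mem_filter.1 hS).2)
    (fun σ hσ => ?_) (fun S hS => ?_) (fun σ hσ => ?_) (fun S hS => ?_) (fun σ hσ => ?_)
  · have hinv := hG.involutive_of_isEdgePerm (mem_filter.1 hσ).2
    exact mem_filter.2 ⟨mem_powerset.2 (edgesOfPerm_subset_edgeFinset (mem_filter.1 hσ).2),
      isMatching_edgesOfPerm hinv⟩
  · obtain ⟨hSG, hSM⟩ := mem_filter.1 hS
    exact mem_filter.2 ⟨mem_univ _, IsMatching.isEdgePerm_toPerm hSM (mem_powerset.1 hSG)⟩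
  · exact toPerm_edgesOfPerm (hG.involutive_of_isEdgePerm (mem_filter.1 hσ).2)
  · obtain ⟨hSG, hSM⟩ := mem_filter.1 hS
    exact edgesOfPerm_toPerm hSM (hdiag S (mem_powerset.1 hSG))
  · exact sign_mul_prod_wMatrix (hG.involutive_of_isEdgePerm (mem_filter.1 hσ).2)
      (mem_filter.1 hσ).2
end

section
/- Let Γ be a weighted forest and P a vertex of Γ. Then d(Γ) = -a_P · d(Γ_P) - Σ_{(P,Q) ∈ E(Γ)} d(Γ_{P,Q}), where Γ_P is Γ with vertex P (and incident edges) removed, and Γ_{P,Q} is Γ with both vertices P and Q (and incident edges) removed. -/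
open Classical Finset

/-!
Expand `d(Γ)` along the row of `P`: the diagonal entry `-a_P` has cofactor `d(Γ_P)`, and each
neighbour `Q` contributes its entry `-1` times a cofactor that we expand once more, along the column
of `P`. In that second expansion the term of a neighbour `R ≠ Q` vanishes: a nonzero term of its
Leibniz expansion would be a permutation that moves every vertex along an edge and has the cycle
`P ↦ R ↦ ⋯ ↦ Q ↦ P` of length at least three, which a forest does not allow. The remaining term,
`R = Q`, equals `d(Γ_{P,Q})`.
-/

namespace Matrix

variable {n R : Type*} [Fintype n] [DecidableEq n] [CommRing R]

theorem det_eq_sum_mul_det_updateRow_single (A : Matrix n n R) (i : n) :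
    A.det = ∑ j, A i j * (A.updateRow i (Pi.single j 1)).det := by
  simp only [det_eq_sum_mul_adjugate_row A i, adjugate_apply]

theorem det_eq_sum_mul_det_updateCol_single (A : Matrix n n R) (j : n) :
    A.det = ∑ i, A i j * (A.updateCol j (Pi.single i 1)).det := by
  rw [← det_transpose, det_eq_sum_mul_det_updateRow_single Aᵀ j]
  simp only [transpose_apply, updateRow_transpose, det_transpose]

theorem exists_perm_forall_ne_zero_of_det_ne_zero {A : Matrix n n R} (h : A.det ≠ 0) :
    ∃ σ : Equiv.Perm n, ∀ i, A (σ i) i ≠ 0 := by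
  contrapose! h
  rw [det_apply]
  refine Finset.sum_eq_zero fun σ _ => ?_
  obtain ⟨i, hi⟩ := h σ
  exact smul_eq_zero_of_right _ (Finset.prod_eq_zero (Finset.mem_univ i) hi)

noncomputable def delMinor (A : Matrix n n R) (s : Set n) [DecidablePred (· ∈ s)] : R :=
  (A.submatrix (Subtype.val : {i // i ∉ s} → n) Subtype.val).det

theorem det_eq_delMinor_singleton_of_row {A : Matrix n n R} {p : n}
    (h : A p = Pi.single p 1) : A.det = A.delMinor {p} := by
  have hp : toSquareBlockProp A (· ∈ ({p} : Set n)) = 1 := by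
    ext ⟨i, rfl⟩ ⟨j, rfl⟩
    simp [toSquareBlockProp, h]
  rw [twoBlockTriangular_det' A (· ∈ ({p} : Set n)), hp]
  · simp only [det_one, one_mul, delMinor]
    congr!
  · rintro i rfl j hj
    simp [h, Ne.symm hj]

theorem delMinor_transpose (A : Matrix n n R) (s : Set n) [DecidablePred (· ∈ s)] :
    Aᵀ.delMinor s = A.delMinor s := by
  rw [delMinor, ← transpose_submatrix, det_transpose, delMinor]

theorem delMinor_insert_of_row {A : Matrix n n R} {s : Set n} [DecidablePred (· ∈ s)] {p : n}
    (hp : p ∉ s) (h : A p = Pi.single p 1) : A.delMinor (insert p s) = A.delMinor s := by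
  set B : Matrix {i // i ∉ s} {i // i ∉ s} R := A.submatrix Subtype.val Subtype.val
  have hrow : B (⟨p, hp⟩ : {i // i ∉ s}) = Pi.single (⟨p, hp⟩ : {i // i ∉ s}) 1 := by
    funext j
    simp [B, h, Pi.single_apply, Subtype.ext_iff]
  let e : {i // i ∉ insert p s} ≃ {j : {i // i ∉ s} // j ∉ ({⟨p, hp⟩} : Set {i // i ∉ s})} :=
    { toFun := fun i => ⟨⟨i, fun h => i.2 (.inr h)⟩, fun h => i.2 (.inl (congrArg Subtype.val h))⟩
      invFun := fun j => ⟨j.1, by rintro (h | h); exacts [j.2 (Subtype.ext h), j.1.2 h]⟩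
      left_inv := fun _ => rfl
      right_inv := fun _ => rfl }
  rw [show A.delMinor s = B.det from rfl, det_eq_delMinor_singleton_of_row hrow, delMinor,
    delMinor, ← det_submatrix_equiv_self e]
  rfl

theorem det_updateRow_single_self (A : Matrix n n R) (p : n) :
    (A.updateRow p (Pi.single p 1)).det = A.delMinor {p} := by
  rw [det_eq_delMinor_singleton_of_row (updateRow_self ..), delMinor, delMinor]
  congr 1
  ext i j
  simp [updateRow_ne i.2]

theorem delMinor_insert_of_col {A : Matrix n n R} {s : Set n} [DecidablePred (· ∈ s)] {p : n}
    (hp : p ∉ s) (h : ∀ i, A i p = (Pi.single p 1 : n → R) i) :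
    A.delMinor (insert p s) = A.delMinor s := by
  rw [← delMinor_transpose, ← delMinor_transpose A s]
  exact delMinor_insert_of_row hp (funext h)

theorem det_updateRow_updateCol_single (A : Matrix n n R) {p q : n} (hpq : p ≠ q) :
    ((A.updateRow p (Pi.single q 1)).updateCol p (Pi.single q 1)).det = -A.delMinor {p, q} := by
  set N := (A.updateRow p (Pi.single q 1)).updateCol p (Pi.single q 1)
  -- Swapping rows `p` and `q` turns column `p` into `e_p` and row `q` into `e_q`.
  set N' := N.submatrix (Equiv.swap p q) id
  have hswap : N'.det = -N.det := by
    rw [det_permute, Equiv.Perm.sign_swap hpq]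
    simp
  have hcol : ∀ i, N' i p = (Pi.single p 1 : n → R) i := by
    intro i
    by_cases hi : i = p <;> by_cases hi' : i = q <;>
      simp_all [N, N', Equiv.swap_apply_def]
  have hrow : N' q = Pi.single q 1 := by
    funext j
    by_cases hj : j = p <;> simp_all [N, N', Pi.single_apply]
  have hsub : N'.delMinor {p, q} = A.delMinor {p, q} := by
    unfold delMinor
    congr 1
    ext ⟨i, hi⟩ ⟨j, hj⟩
    simp only [Set.mem_insert_iff, Set.mem_singleton_iff, not_or] at hi hj
    simp [N, N', hi, hj, Equiv.swap_apply_of_ne_of_ne]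
  calc N.det = -N'.det := by rw [hswap, neg_neg]
    _ = -N'.delMinor {p, q} := by
      rw [det_eq_delMinor_singleton_of_row hrow, delMinor_insert_of_col (by simpa using hpq) hcol]
    _ = -A.delMinor {p, q} := by rw [hsub]

end Matrix

namespace SimpleGraph

theorem IsAcyclic.apply_apply_eq_self {V : Type*} [Finite V] {G : SimpleGraph V}
    (hG : G.IsAcyclic) {σ : Equiv.Perm V} (hσ : ∀ v, σ v ≠ v → G.Adj v (σ v)) (x : V) :
    σ (σ x) = x := by
  -- Otherwise the orbit of `σ x` leads back to `x` without crossing the edge `s(x, σ x)`,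
  -- which is a bridge.
  by_contra hx
  have hmoved : σ x ≠ x := fun h => hx (by rw [h, h])
  set G' := G.deleteEdges {s(x, σ x)}
  have hstep : ∀ z, z ≠ x → G'.Reachable z (σ z) := by
    intro z hz
    by_cases hfix : σ z = z
    · rw [hfix]
    refine Adj.reachable ((deleteEdges_adj ..).mpr ⟨hσ z hfix, ?_⟩)
    rw [Set.mem_singleton_iff, Sym2.eq_iff]
    rintro (⟨h, -⟩ | ⟨h, h'⟩)
    exacts [hz h, hx (h ▸ h')]
  have hchain : ∀ k : ℕ, G'.Reachable (σ x) x ∨ G'.Reachable (σ x) ((σ ^ k) (σ x)) := by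
    intro k
    induction k with
    | zero => exact .inr .rfl
    | succ k ih =>
      rcases ih with h | h
      · exact .inl h
      by_cases hk : (σ ^ k) (σ x) = x
      · rw [hk] at h
        exact .inl h
      · rw [pow_succ', Equiv.Perm.mul_apply]
        exact .inr (h.trans (hstep _ hk))
  have hback : (σ ^ (orderOf σ - 1)) (σ x) = x := by
    rw [← Equiv.Perm.mul_apply, ← pow_succ, Nat.sub_add_cancel (orderOf_pos σ),
      pow_orderOf_eq_one, Equiv.Perm.one_apply]
  have hreach : G'.Reachable (σ x) x := by
    rcases hchain (orderOf σ - 1) with h | h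
    · exact h
    · rwa [hback] at h
  exact isBridge_iff.mp (isAcyclic_iff_forall_adj_isBridge.mp hG (hσ x hmoved)) hreach.symm

end SimpleGraph

open Matrix

section WeightedGraph

variable {V : Type*} [Fintype V] {G : SimpleGraph V} {a : V → ℤ}

theorem adj_of_wMatrix_ne_zero {i j : V} (hij : i ≠ j) (h : wMatrix G a i j ≠ 0) :
    G.Adj i j := by
  by_contra hadj
  simp [wMatrix, hij, hadj] at h

variable [DecidableEq V]

theorem wDetDel_eq_delMinor (s : Set V) [DecidablePred (· ∈ s)] :
    wDetDel G a s = (wMatrix G a).delMinor s := by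
  simp only [wDetDel, wDet, delMinor]
  congr! 1
  ext i j
  rcases eq_or_ne i j with rfl | h
  · simp [wMatrix]
  · simp [wMatrix, h, Subtype.val_injective.ne h]

theorem det_wMatrix_updateRow_updateCol_single_eq_zero (hG : G.IsAcyclic) {p q r : V}
    (hpq : G.Adj p q) (hpr : G.Adj p r) (hrq : r ≠ q) :
    (((wMatrix G a).updateRow p (Pi.single q 1)).updateCol p (Pi.single r 1)).det = 0 := by
  by_contra hdet
  obtain ⟨σ, hσ⟩ := exists_perm_forall_ne_zero_of_det_ne_zero hdet
  have hσp : σ p = r := by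
    simpa [Pi.single_apply] using hσ p
  have hσq : σ q = p := by
    have hp : σ.symm p ≠ p := fun h => hpr.ne (by simpa [hσp] using congrArg σ h)
    have h := hσ (σ.symm p)
    simp only [Equiv.apply_symm_apply, updateCol_ne hp, updateRow_self, Pi.single_apply] at h
    rw [← show σ.symm p = q by simpa using h, Equiv.apply_symm_apply]
  have hadj : ∀ v, σ v ≠ v → G.Adj v (σ v) := by
    intro v hv
    by_cases hvp : v = p
    · subst hvp
      rwa [hσp]
    by_cases hσv : σ v = p
    · rw [← hσq] at hσv
      rw [σ.injective hσv, hσq]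
      exact hpq.symm
    have h := hσ v
    rw [updateCol_ne hvp, updateRow_ne hσv] at h
    exact (adj_of_wMatrix_ne_zero hv h).symm
  exact hrq (by rw [← hσp, ← hσq, hG.apply_apply_eq_self hadj])

variable [DecidableRel G.Adj]

theorem wMatrix_eq : wMatrix G a = -(diagonal a + G.adjMatrix ℤ) := by
  ext i j
  by_cases h : i = j
  · subst h
    simp [wMatrix]
  · by_cases hadj : G.Adj i j <;> simp [wMatrix, h, hadj]

theorem wMatrix_mulVec_apply (p : V) (f : V → ℤ) :
    (wMatrix G a *ᵥ f) p = -a p * f p - ∑ q ∈ G.neighborFinset p, f q := by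
  rw [wMatrix_eq, neg_mulVec, add_mulVec, Pi.neg_apply, Pi.add_apply, mulVec_diagonal,
    SimpleGraph.adjMatrix_mulVec_apply]
  ring

theorem det_wMatrix_updateRow_single_of_adj (hG : G.IsAcyclic) {p q : V} (hpq : G.Adj p q) :
    ((wMatrix G a).updateRow p (Pi.single q 1)).det = (wMatrix G a).delMinor {p, q} := by
  set A := (wMatrix G a).updateRow p (Pi.single q 1)
  have hcol : ∀ i, A i p = -G.adjMatrix ℤ p i := by
    intro i
    by_cases hi : i = p
    · subst hi
      simp [A, hpq.ne]
    · by_cases hadj : G.Adj p i <;> simp [A, hi, wMatrix, hadj, G.adj_comm]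
  rw [det_eq_sum_mul_det_updateCol_single A p]
  simp only [hcol, neg_mul, Finset.sum_neg_distrib]
  change -(G.adjMatrix ℤ *ᵥ _) p = _
  rw [SimpleGraph.adjMatrix_mulVec_apply, Finset.sum_eq_single_of_mem q (by simpa using hpq),
    det_updateRow_updateCol_single _ hpq.ne, neg_neg]
  intro r hr hrq
  exact det_wMatrix_updateRow_updateCol_single_eq_zero hG hpq (by simpa using hr) hrq

end WeightedGraph

theorem forest_det_vertex_expansion_general {V : Type*} [Fintype V]
    (G : SimpleGraph V) (hG : G.IsAcyclic) (a : V → ℤ) (P : V) :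
    wDet G a =
      -a P * wDetDel G a {P} - ∑ q ∈ G.neighborFinset P, wDetDel G a {P, q} := by
  rw [wDet, det_eq_sum_mul_det_updateRow_single _ P]
  change (wMatrix G a *ᵥ _) P = _
  rw [wMatrix_mulVec_apply, det_updateRow_single_self, wDetDel_eq_delMinor]
  congr 1
  refine Finset.sum_congr rfl fun q hq => ?_
  rw [det_wMatrix_updateRow_single_of_adj hG (by simpa using hq), wDetDel_eq_delMinor]

/-- Lemma 5.3 (expansion by a vertex):
`d(Γ) = -a_P · d(Γ_P) - Σ_{(P,Q) ∈ E(Γ)} d(Γ_{P,Q})`. -/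
theorem forest_det_vertex_expansion {V : Type*} [Fintype V] [DecidableEq V]
    (G : SimpleGraph V) (hG : G.IsAcyclic) (a : V → ℤ) (P : V) :
    wDet G a =
      -a P * wDetDel G a {P} - ∑ q ∈ G.neighborFinset P, wDetDel G a {P, q} :=
  forest_det_vertex_expansion_general G hG a P
end

section
/- Let Γ be a weighted forest and (P,Q) an edge of Γ. Then d(Γ) = d(Γ_{PQ}) - d(Γ_{P,Q}), where Γ_{PQ} is Γ with only the edge (P,Q) removed, and Γ_{P,Q} is Γ with both vertices P and Q removed. -/
/-! In the permutation expansion of `det Q(Γ)`, a permutation `σ` contributes only if every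
vertex it moves is adjacent to its image. In a forest such a `σ` is an involution: an orbit of
length at least three would trace a cycle. Hence the expansions of `d(Γ)` and `d(Γ_{PQ})` have
the same terms except for the permutations exchanging `P` and `Q`; these are `(P Q) ∘ τ` with
`τ` a permutation of the other vertices, and together they contribute
`-Q_{PQ} Q_{QP} d(Γ_{P,Q}) = -d(Γ_{P,Q})`. -/

open Classical Finset

namespace SimpleGraph

theorem IsAcyclic.apply_apply_eq_of_forall_adj {V : Type*} [Finite V] {G : SimpleGraph V}
    (hG : G.IsAcyclic) {σ : Equiv.Perm V} (hσ : ∀ v, σ v ≠ v → G.Adj v (σ v)) (v : V) :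
    σ (σ v) = v := by
  by_contra hv
  have hmoved : σ v ≠ v := fun h => hv (by rw [h, h])
  set H := G.deleteEdges {s(v, σ v)}
  -- Walking along the orbit of `σ v` reaches `v` without using the edge `s(v, σ v)`.
  have hreach : ∀ k : ℕ, H.Reachable (σ v) v ∨ H.Reachable (σ v) ((σ ^ k) (σ v)) := by
    intro k
    induction k with
    | zero => exact .inr .rfl
    | succ k ih =>
      refine ih.elim .inl fun h => ?_
      set u := (σ ^ k) (σ v)
      by_cases hu : u = v
      · exact .inl (hu ▸ h)
      have hcycle : σ.SameCycle v u :=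
        Equiv.Perm.sameCycle_pow_right.mpr (Equiv.Perm.sameCycle_apply_right.mpr .rfl)
      have hadj : H.Adj u (σ u) := by
        refine (deleteEdges_adj ..).mpr ⟨hσ u (hcycle.apply_eq_self_iff.not.mp hmoved), ?_⟩
        rw [Set.mem_singleton_iff, Sym2.eq_iff]
        rintro (⟨huv, -⟩ | ⟨huv, hσu⟩)
        · exact hu huv
        · exact hv (huv ▸ hσu)
      rw [pow_succ', Equiv.Perm.mul_apply]
      exact .inr (h.trans hadj.reachable)
  obtain ⟨k, hk⟩ := (Equiv.Perm.sameCycle_apply_left.mpr (.refl σ v)).exists_nat_pow_eq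
  have hbridge := isAcyclic_iff_forall_adj_isBridge.mp hG (hσ v hmoved)
  refine isBridge_iff.mp hbridge ((hreach k).elim id fun h => ?_).symm
  rwa [hk] at h

end SimpleGraph

namespace Matrix

variable {n R : Type*} [Fintype n] [DecidableEq n] [CommRing R]

open Equiv Equiv.Perm

theorem det_sub_det_eq_sum_swap {A B : Matrix n n R} {p q : n}
    (hAB : ∀ i j, s(i, j) ≠ s(p, q) → A i j = B i j) (hBpq : B p q = 0) (hBqp : B q p = 0)
    (hA : ∀ σ : Perm n, ∏ i, A (σ i) i ≠ 0 → (σ p = q ↔ σ q = p)) :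
    A.det - B.det =
      ∑ σ ∈ univ.filter (fun σ : Perm n => σ p = q ∧ σ q = p), sign σ • ∏ i, A (σ i) i := by
  rw [det_apply, det_apply, ← sum_sub_distrib, sum_filter]
  refine sum_congr rfl fun σ _ => ?_
  split_ifs with hswap
  · have hB0 : ∏ i, B (σ i) i = 0 := prod_eq_zero (mem_univ q) (by rw [hswap.2, hBpq])
    rw [hB0, smul_zero, sub_zero]
  rw [← smul_sub, sub_eq_zero_of_eq, smul_zero]
  by_cases hpq : σ p = q ∨ σ q = p
  · have hA0 : ∏ i, A (σ i) i = 0 := by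
      by_contra h
      exact hswap (by have := hA σ h; tauto)
    rcases hpq with h | h
    · rw [hA0, prod_eq_zero (mem_univ p) (by rw [h, hBqp])]
    · rw [hA0, prod_eq_zero (mem_univ q) (by rw [h, hBpq])]
  refine prod_congr rfl fun i _ => hAB _ _ ?_
  rw [Ne, Sym2.eq_iff]
  rintro (⟨hi, rfl⟩ | ⟨hi, rfl⟩) <;> tauto

theorem sum_swap_eq_neg_mul_det_submatrix (A : Matrix n n R) {p q : n} (hpq : p ≠ q) :
    ∑ σ ∈ univ.filter (fun σ : Perm n => σ p = q ∧ σ q = p), sign σ • ∏ i, A (σ i) i =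
      -(A p q * A q p) *
        (A.submatrix (Subtype.val : {i // i ∉ ({p, q} : Set n)} → n) Subtype.val).det := by
  have hfix (ρ : Perm n) : (∀ i, ¬i ∉ ({p, q} : Set n) → ρ i = i) ↔
      (Equiv.swap p q * ρ) p = q ∧ (Equiv.swap p q * ρ) q = p := by
    simp only [Set.mem_insert_iff, Set.mem_singleton_iff, not_not, forall_eq_or_imp, forall_eq,
      Perm.mul_apply, swap_apply_eq_iff, swap_apply_left, swap_apply_right]
  let e : Perm {i // i ∉ ({p, q} : Set n)} ≃ {σ : Perm n // σ p = q ∧ σ q = p} :=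
    (Perm.subtypeEquivSubtypePerm _).trans ((Equiv.mulLeft (Equiv.swap p q)).subtypeEquiv hfix)
  rw [sum_subtype (p := fun σ : Perm n => σ p = q ∧ σ q = p) _ (by simp), ← e.sum_comp,
    det_apply, mul_sum]
  refine sum_congr rfl fun τ _ => ?_
  have hsign : sign (Equiv.swap p q * ofSubtype τ) = -sign τ := by
    rw [Perm.sign_mul, sign_swap hpq, sign_ofSubtype, neg_one_mul]
  have hprod : ∏ i, A ((Equiv.swap p q * ofSubtype τ) i) i =
      A q p * A p q * ∏ i, A (τ i) i := by
    have hout : ∀ i ∈ ({p, q} : Set n), ofSubtype τ i = i := fun i hi =>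
      ofSubtype_apply_of_not_mem τ (not_not.mpr hi)
    have hin (i : {i // i ∉ ({p, q} : Set n)}) : (Equiv.swap p q * ofSubtype τ) i = τ i := by
      have hτ := (τ i).2
      simp only [Set.mem_insert_iff, Set.mem_singleton_iff, not_or] at hτ
      rw [Perm.mul_apply, ofSubtype_apply_coe, swap_apply_of_ne_of_ne hτ.1 hτ.2]
    rw [← prod_mul_prod_compl {p, q}, prod_pair hpq,
      prod_subtype ({p, q}ᶜ : Finset n) (p := fun i => i ∉ ({p, q} : Set n))
        (F := inferInstance) (by simp)]
    simp only [hin]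
    simp only [Perm.mul_apply, hout p (by simp), hout q (by simp), swap_apply_left,
      swap_apply_right]
  have he : (e τ : Perm n) = Equiv.swap p q * ofSubtype τ := rfl
  rw [he, hsign, hprod, Units.neg_smul, mul_smul_comm, ← smul_neg]
  congr 1
  simp only [submatrix_apply]
  ring

end Matrix

section wMatrix

variable {V : Type*} [Fintype V] {G : SimpleGraph V} {a : V → ℤ}

theorem wDetDel_eq_det_submatrix [DecidableEq V] (s : Set V) [DecidablePred (· ∈ s)] :
    wDetDel G a s = ((wMatrix G a).submatrix (Subtype.val : {v // v ∉ s} → V) Subtype.val).det := by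
  unfold wDetDel wDet
  congr! 1
  ext i j
  simp [wMatrix, Subtype.ext_iff]

theorem adj_of_prod_wMatrix_ne_zero {σ : Equiv.Perm V} (hσ : ∏ i, wMatrix G a (σ i) i ≠ 0)
    (v : V) (hv : σ v ≠ v) : G.Adj v (σ v) := by
  refine by_contra fun hadj => hσ (prod_eq_zero (mem_univ v) ?_)
  simp [wMatrix, hv, G.adj_comm, hadj]

end wMatrix

/-- Lemma 5.4 (expansion by an edge): `d(Γ) = d(Γ_{PQ}) - d(Γ_{P,Q})`. -/
theorem forest_det_edge_expansion {V : Type*} [Fintype V]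
    (G : SimpleGraph V) (hG : G.IsAcyclic) (a : V → ℤ) (P Q : V)
    (hPQ : G.Adj P Q) :
    wDet G a = wDet (G.deleteEdges {s(P, Q)}) a - wDetDel G a {P, Q} := by
  have hinvol (σ : Equiv.Perm V) (hσ : ∏ i, wMatrix G a (σ i) i ≠ 0) (v : V) : σ (σ v) = v :=
    hG.apply_apply_eq_of_forall_adj (adj_of_prod_wMatrix_ne_zero hσ) v
  have hexpand := Matrix.det_sub_det_eq_sum_swap (A := wMatrix G a)
    (B := wMatrix (G.deleteEdges {s(P, Q)}) a)
    (fun i j hij => by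
      simp only [wMatrix, Matrix.of_apply, SimpleGraph.deleteEdges_adj, Set.mem_singleton_iff, hij,
        not_false_eq_true, and_true])
    (by simp [wMatrix, hPQ.ne]) (by simp [wMatrix, hPQ.ne.symm])
    (fun σ hσ => ⟨fun h => h ▸ hinvol σ hσ P, fun h => h ▸ hinvol σ hσ Q⟩)
  have hPQ' : wMatrix G a P Q = -1 := by simp [wMatrix, hPQ.ne, hPQ]
  have hQP' : wMatrix G a Q P = -1 := by simp [wMatrix, hPQ.ne.symm, hPQ.symm]
  rw [Matrix.sum_swap_eq_neg_mul_det_submatrix _ hPQ.ne, hPQ', hQP'] at hexpand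
  rw [wDetDel_eq_det_submatrix, wDet, wDet]
  linarith
end

section
/- Let Γ be a weighted forest and let Γ' be obtained from Γ by blowing up a vertex P: add a new vertex R of weight -1 joined by an edge to P, and decrease the weight of P by 1. Then d(Γ') = d(Γ). -/
open Classical Finset

/-- The blow-up of a weighted graph at a vertex `P`: a new vertex `R` (of weight
`-1`) is attached to `P`, and the weight of `P` drops by `1`. -/
def blowupVertexGraph {V : Type*} (G : SimpleGraph V) (P : V) :
    SimpleGraph (V ⊕ Unit) where
  Adj x y :=
    match x, y with
    | Sum.inl u, Sum.inl v => G.Adj u v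
    | Sum.inl u, Sum.inr _ => u = P
    | Sum.inr _, Sum.inl v => v = P
    | Sum.inr _, Sum.inr _ => False
  symm := ⟨by
    rintro (u | u) (v | v) h
    · exact G.adj_symm h
    · exact h
    · exact h
    · exact h.elim⟩
  loopless := ⟨by
    rintro (u | u) h
    · exact G.irrefl h
    · exact h.elim⟩

/-- The weights after blowing up the vertex `P`: the new vertex `R` gets weight
`-1`, the weight of `P` drops by `1`. -/
noncomputable def blowupVertexWeights {V : Type*} [DecidableEq V] (a : V → ℤ) (P : V) :
    V ⊕ Unit → ℤ :=
  Sum.elim (Function.update a P (a P - 1)) (fun _ => (-1 : ℤ))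

/-! The new vertex `R` contributes a diagonal entry `1` to `Q(Γ')` and is joined only to `P`, so
taking the Schur complement of that `1 × 1` block leaves `Q(Γ)` with the single entry at `(P, P)`
decreased by `1`; this exactly undoes the change of the weight of `P`. -/

theorem wMatrix_update {V : Type*} [Fintype V] [DecidableEq V] (G : SimpleGraph V)
    (a : V → ℤ) (P : V) (c : ℤ) :
    wMatrix G (Function.update a P c) = wMatrix G a + Matrix.single P P (a P - c) := by
  ext i j
  simp only [wMatrix, Matrix.of_apply, Matrix.add_apply, Matrix.single_apply,
    Function.update_apply]
  split_ifs <;> grind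

theorem wMatrix_blowupVertexGraph {V : Type*} [Fintype V] [DecidableEq V]
    (G : SimpleGraph V) (a : V → ℤ) (P : V) :
    wMatrix (blowupVertexGraph G P) (blowupVertexWeights a P) =
      Matrix.fromBlocks (wMatrix G (Function.update a P (a P - 1)))
        (Matrix.single P () (-1)) (Matrix.single () P (-1)) 1 := by
  ext (u | u) (v | v) <;>
    simp only [wMatrix, blowupVertexGraph, blowupVertexWeights, Matrix.of_apply,
      Matrix.fromBlocks_apply₁₁, Matrix.fromBlocks_apply₁₂, Matrix.fromBlocks_apply₂₁,
      Matrix.fromBlocks_apply₂₂, Matrix.single_apply, Matrix.one_apply, Sum.elim_inl,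
      Sum.elim_inr, Sum.inl.injEq, reduceCtorEq, eq_comm (a := P)] <;>
    split_ifs <;> simp_all

theorem forest_det_blowup_vertex_general {V : Type*} [Fintype V] [DecidableEq V]
    (G : SimpleGraph V) (a : V → ℤ) (P : V) :
    wDet (blowupVertexGraph G P) (blowupVertexWeights a P) = wDet G a := by
  rw [wDet, wMatrix_blowupVertexGraph]
  trans (wMatrix G (Function.update a P (a P - 1)) -
    Matrix.single P () (-1) * Matrix.single () P (-1)).det
  -- `convert` and `congr!` reconcile the classical `DecidableEq` instances that `wDet` uses
  · convert Matrix.det_fromBlocks_one₂₂ _ _ _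
  rw [Matrix.single_mul_single_same, wMatrix_update]
  simp only [wDet, mul_neg, mul_one, neg_neg, sub_sub_cancel, add_sub_cancel_right]
  congr!

/-- Lemma 5.6, Case 1: the determinant of a weighted forest is preserved by
blowing up a vertex. -/
theorem forest_det_blowup_vertex {V : Type*} [Fintype V] [DecidableEq V]
    (G : SimpleGraph V) (hG : G.IsAcyclic) (a : V → ℤ) (P : V) :
    wDet (blowupVertexGraph G P) (blowupVertexWeights a P) = wDet G a :=
  forest_det_blowup_vertex_general G a P
end

section
/- In a tree of curves with K-labels built from a single vertex labeled -2 by the two blow-up operations (attach a new vertex with label a+1 to a vertex labeled a; or subdivide an edge with endpoint labels a and b, giving the new vertex label a+b), every vertex with label 0 is adjacent only to vertices with labels 1 or -1. -/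
open Finset

/-- Inductively generated labeled trees of exceptional curves at infinity:
start from a single vertex (vertex `0`) with K-label `-2`; either attach a new
leaf `R` to a vertex `P` (new label `l P + 1`), or subdivide an edge `(P,Q)`
by a new vertex `R` (new label `l P + l Q`). The vertex set, edge set and
labeling function are recorded. -/
inductive KTree : Finset ℕ → Finset (Sym2 ℕ) → (ℕ → ℤ) → Prop
  | base : KTree {0} ∅ (fun _ => -2)
  | attach {V E l} (P R : ℕ) : KTree V E l → P ∈ V → R ∉ V →
      KTree (insert R V) (insert s(P, R) E) (Function.update l R (l P + 1))
  | subdivide {V E l} (P Q R : ℕ) : KTree V E l → s(P, Q) ∈ E → R ∉ V →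
      KTree (insert R V) (insert s(P, R) (insert s(R, Q) (E.erase s(P, Q))))
        (Function.update l R (l P + l Q))

lemma ktree_edge_inv {V : Finset ℕ} {E : Finset (Sym2 ℕ)} {l : ℕ → ℤ}
    (h : KTree V E l) : ∀ {P Q : ℕ}, s(P, Q) ∈ E →
      P ∈ V ∧ Q ∈ V ∧ IsCoprime (l P) (l Q) := by
  induction h with
  | base => intro P Q h; simp at h
  | @attach V E l P R h hP hR ih =>
    intro a b hab
    have hPR : P ≠ R := fun hh => hR (hh ▸ hP)
    rcases Finset.mem_insert.mp hab with h1 | h1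
    · rcases Sym2.eq_iff.mp h1 with ⟨rfl, rfl⟩ | ⟨rfl, rfl⟩
      · refine ⟨Finset.mem_insert_of_mem hP, Finset.mem_insert_self _ _, ?_⟩
        rw [Function.update_of_ne hPR, Function.update_self]
        simpa [mul_one, add_comm] using
          (isCoprime_one_right (x := l a)).add_mul_left_right 1
      · refine ⟨Finset.mem_insert_self _ _, Finset.mem_insert_of_mem hP, ?_⟩
        rw [Function.update_of_ne hPR, Function.update_self]
        exact ((by simpa [mul_one, add_comm] using
          (isCoprime_one_right (x := l b)).add_mul_left_right 1 :
            IsCoprime (l b) (l b + 1))).symm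
    · obtain ⟨ha, hb, hc⟩ := ih h1
      have haR : a ≠ R := fun hh => hR (hh ▸ ha)
      have hbR : b ≠ R := fun hh => hR (hh ▸ hb)
      refine ⟨Finset.mem_insert_of_mem ha, Finset.mem_insert_of_mem hb, ?_⟩
      rwa [Function.update_of_ne haR, Function.update_of_ne hbR]
  | @subdivide V E l P Q R h hPQ hR ih =>
    intro a b hab
    obtain ⟨hPV, hQV, hcop⟩ := ih hPQ
    have hPR : P ≠ R := fun hh => hR (hh ▸ hPV)
    have hQR : Q ≠ R := fun hh => hR (hh ▸ hQV)
    have hPRc : IsCoprime (l P) (l P + l Q) := by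
      simpa [mul_one, add_comm] using hcop.add_mul_left_right 1
    have hRQc : IsCoprime (l P + l Q) (l Q) := by
      have := hcop.symm.add_mul_left_right 1
      simpa [mul_one, add_comm] using this.symm
    rcases Finset.mem_insert.mp hab with h1 | h1
    · rcases Sym2.eq_iff.mp h1 with ⟨rfl, rfl⟩ | ⟨rfl, rfl⟩
      · refine ⟨Finset.mem_insert_of_mem hPV, Finset.mem_insert_self _ _, ?_⟩
        rw [Function.update_of_ne hPR, Function.update_self]
        exact hPRc
      · refine ⟨Finset.mem_insert_self _ _, Finset.mem_insert_of_mem hPV, ?_⟩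
        rw [Function.update_of_ne hPR, Function.update_self]
        exact hPRc.symm
    rcases Finset.mem_insert.mp h1 with h2 | h2
    · rcases Sym2.eq_iff.mp h2 with ⟨rfl, rfl⟩ | ⟨rfl, rfl⟩
      · refine ⟨Finset.mem_insert_self _ _, Finset.mem_insert_of_mem hQV, ?_⟩
        rw [Function.update_of_ne hQR, Function.update_self]
        exact hRQc
      · refine ⟨Finset.mem_insert_of_mem hQV, Finset.mem_insert_self _ _, ?_⟩
        rw [Function.update_of_ne hQR, Function.update_self]
        exact hRQc.symm
    · obtain ⟨ha, hb, hc⟩ := ih (Finset.mem_of_mem_erase h2)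
      have haR : a ≠ R := fun hh => hR (hh ▸ ha)
      have hbR : b ≠ R := fun hh => hR (hh ▸ hb)
      refine ⟨Finset.mem_insert_of_mem ha, Finset.mem_insert_of_mem hb, ?_⟩
      rwa [Function.update_of_ne haR, Function.update_of_ne hbR]

/-- In a K-labeled tree of exceptional curves, a vertex with label `0` is
adjacent only to vertices with labels `1` or `-1`. -/
theorem ktree_zero_neighbors {V : Finset ℕ} {E : Finset (Sym2 ℕ)} {l : ℕ → ℤ}
    (h : KTree V E l) {P Q : ℕ} (hPQ : s(P, Q) ∈ E) (hP : l P = 0) :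
    l Q = 1 ∨ l Q = -1 := by
  obtain ⟨-, -, hc⟩ := ktree_edge_inv h hPQ
  rw [hP] at hc
  exact Int.isUnit_iff.mp (isCoprime_zero_left.mp hc)
end

section
/- In a tree of curves with K-labels built as above from a single vertex labeled -2, the set of vertices with negative labels forms a connected subtree. -/
/-! Induction along the construction. Old vertices keep their labels, and the new vertex `R`,
if negative, is adjacent to an old negative vertex: to `P` when `l P + 1 < 0`, and to `P` or `Q`
when `l P + l Q < 0`. Every edge between old negative vertices survives, except a subdivided
edge `P Q` with both ends negative; that one is replaced by the path `P R Q`, and `R` is then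
negative as well. -/

open Finset

/-- The simple graph on `ℕ` determined by a finite set of edges. -/
def graphOfEdges (E : Finset (Sym2 ℕ)) : SimpleGraph ℕ where
  Adj u v := u ≠ v ∧ s(u, v) ∈ E
  symm := ⟨fun u v h => ⟨h.1.symm, by rw [Sym2.eq_swap]; exact h.2⟩⟩
  loopless := ⟨fun u h => h.1 rfl⟩

namespace SimpleGraph

variable {V : Type*} {G G' : SimpleGraph V} {s t : Set V}

theorem Connected.induce_of_adj_or_subdivided (hs : (G.induce s).Connected) (hst : s ⊆ t)
    (hedge : ∀ u ∈ s, ∀ v ∈ s, G.Adj u v → G'.Adj u v ∨ ∃ w ∈ t, G'.Adj u w ∧ G'.Adj w v)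
    (hnew : ∀ v ∈ t, v ∉ s → ∃ u ∈ s, G'.Adj u v) :
    (G'.induce t).Connected := by
  have lift : ∀ {u v : s}, (G.induce s).Reachable u v →
      (G'.induce t).Reachable (Set.inclusion hst u) (Set.inclusion hst v) := by
    intro u v huv
    rw [reachable_iff_reflTransGen] at huv ⊢
    refine Relation.ReflTransGen.lift' (Set.inclusion hst) (fun a b hab => ?_) _ _ huv
    rw [Function.onFun, ← reachable_iff_reflTransGen]
    rcases hedge a a.2 b b.2 hab with hab' | ⟨w, hw, haw, hwb⟩
    · exact Adj.reachable (G := G'.induce t) hab'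
    · exact (Adj.reachable (G := G'.induce t) (u := Set.inclusion hst a) (v := ⟨w, hw⟩) haw).trans
        (Adj.reachable (G := G'.induce t) hwb)
  obtain ⟨u₀⟩ := hs.nonempty
  rw [connected_iff_exists_forall_reachable]
  refine ⟨Set.inclusion hst u₀, fun ⟨v, hv⟩ => ?_⟩
  by_cases hvs : v ∈ s
  · exact lift (hs.preconnected u₀ ⟨v, hvs⟩)
  · obtain ⟨u, hu, huv⟩ := hnew v hv hvs
    exact (lift (hs.preconnected u₀ ⟨u, hu⟩)).trans (Adj.reachable (G := G'.induce t) huv)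

end SimpleGraph

def negativeVertices (V : Finset ℕ) (l : ℕ → ℤ) : Set ℕ := {v | v ∈ V ∧ l v < 0}

theorem mem_negativeVertices_update {V : Finset ℕ} {l : ℕ → ℤ} {R : ℕ} (hR : R ∉ V) (a : ℤ)
    {v : ℕ} : v ∈ negativeVertices (insert R V) (Function.update l R a) ↔
      v = R ∧ a < 0 ∨ v ∈ negativeVertices V l := by
  by_cases hv : v = R
  · subst hv
    simp [negativeVertices, hR]
  · simp [negativeVertices, hv]

theorem negativeVertices_subset_update {V : Finset ℕ} {l : ℕ → ℤ} {R : ℕ} (hR : R ∉ V) (a : ℤ) :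
    negativeVertices V l ⊆ negativeVertices (insert R V) (Function.update l R a) :=
  fun _ hv => (mem_negativeVertices_update hR a).2 (Or.inr hv)

namespace KTree

theorem mem_of_mem_edges {V : Finset ℕ} {E : Finset (Sym2 ℕ)} {l : ℕ → ℤ} (h : KTree V E l)
    {x y : ℕ} (hxy : s(x, y) ∈ E) : x ∈ V ∧ y ∈ V := by
  induction h generalizing x y with
  | base => simp at hxy
  | attach P R _ hP _ ih =>
    simp only [mem_insert, Sym2.eq_iff] at hxy ⊢
    rcases hxy with (⟨rfl, rfl⟩ | ⟨rfl, rfl⟩) | hxy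
    · exact ⟨Or.inr hP, Or.inl rfl⟩
    · exact ⟨Or.inl rfl, Or.inr hP⟩
    · exact ⟨Or.inr (ih hxy).1, Or.inr (ih hxy).2⟩
  | subdivide P Q R _ hPQ _ ih =>
    obtain ⟨hP, hQ⟩ := ih hPQ
    simp only [mem_insert, mem_erase, Sym2.eq_iff] at hxy ⊢
    rcases hxy with (⟨rfl, rfl⟩ | ⟨rfl, rfl⟩) | (⟨rfl, rfl⟩ | ⟨rfl, rfl⟩) | ⟨-, hxy⟩
    · exact ⟨Or.inr hP, Or.inl rfl⟩
    · exact ⟨Or.inl rfl, Or.inr hP⟩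
    · exact ⟨Or.inl rfl, Or.inr hQ⟩
    · exact ⟨Or.inr hQ, Or.inl rfl⟩
    · exact ⟨Or.inr (ih hxy).1, Or.inr (ih hxy).2⟩

end KTree

section NegativeConnected

variable {V : Finset ℕ} {E : Finset (Sym2 ℕ)} {l : ℕ → ℤ}

theorem connected_negativeVertices_attach {P R : ℕ} (hP : P ∈ V) (hR : R ∉ V)
    (ih : ((graphOfEdges E).induce (negativeVertices V l)).Connected) :
    ((graphOfEdges (insert s(P, R) E)).induce
      (negativeVertices (insert R V) (Function.update l R (l P + 1)))).Connected := by
  have hPR : P ≠ R := fun h => hR (h ▸ hP)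
  refine ih.induce_of_adj_or_subdivided (negativeVertices_subset_update hR _)
    (fun u _ v _ huv => Or.inl ⟨huv.1, mem_insert_of_mem huv.2⟩) (fun v hv hvN => ?_)
  obtain ⟨rfl, hneg⟩ := ((mem_negativeVertices_update hR _).1 hv).resolve_right hvN
  exact ⟨P, ⟨hP, by omega⟩, hPR, mem_insert_self _ _⟩

theorem connected_negativeVertices_subdivide {P Q R : ℕ} (hP : P ∈ V) (hQ : Q ∈ V) (hR : R ∉ V)
    (ih : ((graphOfEdges E).induce (negativeVertices V l)).Connected) :
    ((graphOfEdges (insert s(P, R) (insert s(R, Q) (E.erase s(P, Q))))).induce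
      (negativeVertices (insert R V) (Function.update l R (l P + l Q)))).Connected := by
  set G' := graphOfEdges (insert s(P, R) (insert s(R, Q) (E.erase s(P, Q))))
  have hPR : G'.Adj P R := ⟨fun h => hR (h ▸ hP), by simp⟩
  have hRQ : G'.Adj R Q := ⟨fun h => hR (h ▸ hQ), by simp⟩
  refine ih.induce_of_adj_or_subdivided (negativeVertices_subset_update hR _)
    (fun u hu v hv huv => ?_) (fun v hv hvN => ?_)
  · by_cases he : s(u, v) = s(P, Q)
    · refine Or.inr ⟨R, (mem_negativeVertices_update hR _).2 (Or.inl ⟨rfl, ?_⟩), ?_⟩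
      · rcases Sym2.eq_iff.1 he with ⟨rfl, rfl⟩ | ⟨rfl, rfl⟩ <;> linarith [hu.2, hv.2]
      · rcases Sym2.eq_iff.1 he with ⟨rfl, rfl⟩ | ⟨rfl, rfl⟩
        exacts [⟨hPR, hRQ⟩, ⟨hRQ.symm, hPR.symm⟩]
    · exact Or.inl ⟨huv.1, mem_insert_of_mem (mem_insert_of_mem (mem_erase.2 ⟨he, huv.2⟩))⟩
  · obtain ⟨rfl, hneg⟩ := ((mem_negativeVertices_update hR _).1 hv).resolve_right hvN
    by_cases hPneg : l P < 0
    · exact ⟨P, ⟨hP, hPneg⟩, hPR⟩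
    · exact ⟨Q, ⟨hQ, by omega⟩, hRQ.symm⟩

end NegativeConnected

/-- In a K-labeled tree of exceptional curves, the vertices with negative
labels form a connected subtree. -/
theorem ktree_negative_connected {V : Finset ℕ} {E : Finset (Sym2 ℕ)} {l : ℕ → ℤ}
    (h : KTree V E l) :
    ((graphOfEdges E).induce {v : ℕ | v ∈ V ∧ l v < 0}).Connected := by
  change ((graphOfEdges E).induce (negativeVertices V l)).Connected
  induction h with
  | base =>
    rw [SimpleGraph.connected_iff_exists_forall_reachable]
    refine ⟨⟨0, by simp [negativeVertices]⟩, fun ⟨v, hv⟩ => ?_⟩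
    obtain rfl : v = 0 := by simpa using hv.1
    rfl
  | attach P R _ hP hR ih => exact connected_negativeVertices_attach hP hR ih
  | subdivide P Q R hT hPQ hR ih =>
    obtain ⟨hP, hQ⟩ := hT.mem_of_mem_edges hPQ
    exact connected_negativeVertices_subdivide hP hQ hR ih
end

section
/- With the notation of the previous statement, if P and Q are exceptional curves on opposite sides of E in the tree Γ (i.e., E lies on the path from P to Q), then the determinant d_{P,Q} of Γ with both P and Q removed satisfies d_{P,Q} = u_P²·u_Q² − d_P·d_Q. -/
open Classical Finset

noncomputable def sumSplit {V : Type*} (s : Set V) : ({v // v ∈ s} ⊕ {v // v ∉ s}) ≃ V where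
  toFun := Sum.elim Subtype.val Subtype.val
  invFun v := if h : v ∈ s then Sum.inl ⟨v, h⟩ else Sum.inr ⟨v, h⟩
  left_inv := by rintro (⟨v, hv⟩ | ⟨v, hv⟩) <;> simp [hv]
  right_inv := by intro v; by_cases h : v ∈ s <;> simp [h]

lemma jac_minor {V : Type*} [Fintype V] (M : Matrix V V ℚ) (hM : M * M⁻¹ = 1) (s : Set V) :
    M.det * ((M⁻¹).submatrix (Subtype.val : {v // v ∈ s} → V) Subtype.val).det
      = (M.submatrix (Subtype.val : {v // v ∉ s} → V) Subtype.val).det := by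
  classical
  set e := sumSplit s
  set A := M.submatrix (Subtype.val : {v // v ∈ s} → V) (Subtype.val : {v // v ∈ s} → V)
  set B := M.submatrix (Subtype.val : {v // v ∈ s} → V) (Subtype.val : {v // v ∉ s} → V)
  set C := M.submatrix (Subtype.val : {v // v ∉ s} → V) (Subtype.val : {v // v ∈ s} → V)
  set D := M.submatrix (Subtype.val : {v // v ∉ s} → V) (Subtype.val : {v // v ∉ s} → V)
  set W := (M⁻¹).submatrix (Subtype.val : {v // v ∈ s} → V) (Subtype.val : {v // v ∈ s} → V)
  set X := (M⁻¹).submatrix (Subtype.val : {v // v ∈ s} → V) (Subtype.val : {v // v ∉ s} → V)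
  set Y := (M⁻¹).submatrix (Subtype.val : {v // v ∉ s} → V) (Subtype.val : {v // v ∈ s} → V)
  set Z := (M⁻¹).submatrix (Subtype.val : {v // v ∉ s} → V) (Subtype.val : {v // v ∉ s} → V)
  have hM' : M.submatrix e e = Matrix.fromBlocks A B C D := by
    ext (i | i) (j | j) <;> rfl
  have hN' : (M⁻¹).submatrix e e = Matrix.fromBlocks W X Y Z := by
    ext (i | i) (j | j) <;> rfl
  have h1 : Matrix.fromBlocks A B C D * Matrix.fromBlocks W X Y Z = 1 := by
    rw [← hM', ← hN', Matrix.submatrix_mul_equiv, hM, Matrix.submatrix_one_equiv]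
  rw [Matrix.fromBlocks_multiply, ← Matrix.fromBlocks_one, Matrix.fromBlocks_inj] at h1
  have h3 : Matrix.fromBlocks A B C D * Matrix.fromBlocks W 0 Y 1
      = Matrix.fromBlocks 1 B 0 D := by
    rw [Matrix.fromBlocks_multiply]
    simp [h1.1, h1.2.2.1]
  have h4 := congrArg Matrix.det h3
  rw [Matrix.det_mul, Matrix.det_fromBlocks_zero₁₂, Matrix.det_fromBlocks_zero₂₁] at h4
  have hdetM : (Matrix.fromBlocks A B C D).det = M.det := by
    rw [← hM', Matrix.det_submatrix_equiv_self]
  simpa [hdetM] using h4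

set_option maxHeartbeats 1000000 in
lemma wDetDel_cast {V : Type*} [Fintype V] (G : SimpleGraph V) (a : V → ℤ) (s : Set V) :
    ((wDetDel G a s : ℤ) : ℚ)
      = (((wMatrix G a).map (Int.cast : ℤ → ℚ)).submatrix
          (Subtype.val : {v // v ∉ s} → V) Subtype.val).det := by
  classical
  have h1 : wMatrix (SimpleGraph.comap (Subtype.val : {v // v ∉ s} → V) G)
      (fun v => a v.1) = (wMatrix G a).submatrix Subtype.val Subtype.val := by
    ext i j
    simp [wMatrix, Subtype.ext_iff]
  have h2 : ((wMatrix G a).map (Int.cast : ℤ → ℚ)).submatrix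
      (Subtype.val : {v // v ∉ s} → V) (Subtype.val : {v // v ∉ s} → V)
      = ((wMatrix G a).submatrix (Subtype.val : {v // v ∉ s} → V)
          (Subtype.val : {v // v ∉ s} → V)).map (Int.cast : ℤ → ℚ) := rfl
  rw [wDetDel, wDet, h1, h2]
  have h3 := RingHom.map_det (Int.castRingHom ℚ)
    ((wMatrix G a).submatrix (Subtype.val : {v // v ∉ s} → V) (Subtype.val : {v // v ∉ s} → V))
  rw [RingHom.mapMatrix_apply] at h3
  rw [show ⇑(Int.castRingHom ℚ) = (Int.cast : ℤ → ℚ) from rfl] at h3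
  convert h3 using 2
  congr!

lemma det_irrel {n : Type*} {R : Type*} [CommRing R] {D1 D2 : DecidableEq n}
    {F1 F2 : Fintype n} (A : Matrix n n R) :
    @Matrix.det n D1 F1 R _ A = @Matrix.det n D2 F2 R _ A := by congr!

noncomputable def pairEquiv {V : Type*} (P Q : V) (hPQ : P ≠ Q) :
    Fin 2 ≃ {v // v ∈ ({P, Q} : Set V)} where
  toFun i := if i = 0 then ⟨P, Set.mem_insert _ _⟩ else ⟨Q, Set.mem_insert_of_mem _ rfl⟩
  invFun v := if v.1 = P then 0 else 1
  left_inv := by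
    intro i; fin_cases i
    · simp
    · simp [Ne.symm hPQ]
  right_inv := by
    rintro ⟨v, hv⟩
    rcases hv with rfl | hv
    · simp
    · rcases hv with rfl
      simp [Ne.symm hPQ]

@[simp] lemma pairEquiv_zero_val {V : Type*} (P Q : V) (hPQ : P ≠ Q) :
    ((pairEquiv P Q hPQ 0 : {v // v ∈ ({P, Q} : Set V)}) : V) = P := rfl

@[simp] lemma pairEquiv_one_val {V : Type*} (P Q : V) (hPQ : P ≠ Q) :
    ((pairEquiv P Q hPQ 1 : {v // v ∈ ({P, Q} : Set V)}) : V) = Q := rfl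

/-- Lemma 5.9: with `Γ`, `E`, `u` as in Lemma 5.8, if `P` and `Q` lie on
different sides of `E` in the tree (i.e. `E` lies on the path from `P` to `Q`,
so `P` and `Q` are not connected in `Γ` with `E` removed), then
`d_{P,Q} = u_P²·u_Q² − d_P·d_Q`. -/
theorem exc_tree_two_sided_det {V : Type*} [Fintype V]
    (G : SimpleGraph V) (hG : G.IsTree) (a : V → ℤ)
    (hdet : wDet G a = -1)
    (E : V) (u : V → ℤ) (huE : u E = 1) (hunat : ∀ P, 0 ≤ u P)
    (hu : ∀ P : V,
      (∑ Q, (if P = Q then a P else if G.Adj P Q then 1 else 0) * u Q) =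
        if P = E then 1 else 0)
    (P Q : V) (hP : P ≠ E) (hQ : Q ≠ E) (hPQ : P ≠ Q)
    (hsep : ¬ (G.induce {v : V | v ≠ E}).Reachable
        ⟨P, hP⟩ ⟨Q, hQ⟩) :
    wDetDel G a {P, Q} = (u P) ^ 2 * (u Q) ^ 2 - wDetDel G a {P} * wDetDel G a {Q} := by
  classical
  obtain ⟨M, hM⟩ : ∃ M' : Matrix V V ℚ, M' = (wMatrix G a).map (Int.cast : ℤ → ℚ) := ⟨_, rfl⟩
  have hdetM : M.det = -1 := by
    have h3 := RingHom.map_det (Int.castRingHom ℚ) (wMatrix G a)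
    rw [RingHom.mapMatrix_apply, show ⇑(Int.castRingHom ℚ) = (Int.cast : ℤ → ℚ) from rfl] at h3
    rw [hM, ← h3]
    rw [show (wMatrix G a).det = wDet G a from rfl, hdet]
    norm_num
  have hunit : IsUnit M.det := by rw [hdetM]; exact isUnit_one.neg
  have hMN : M * M⁻¹ = 1 := Matrix.mul_nonsing_inv M hunit
  have hNM : M⁻¹ * M = 1 := Matrix.nonsing_inv_mul M hunit
  set u' : V → ℚ := fun v => ((u v : ℤ) : ℚ) with hu'
  -- M.mulVec u' = -e_E
  have hMu : M.mulVec u' = fun v => if v = E then (-1 : ℚ) else 0 := by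
    funext v
    have hv := hu v
    have key : ∀ j, M v j = -(((if v = j then a v else if G.Adj v j then 1 else 0 : ℤ) : ℚ)) := by
      intro j
      rw [hM]
      simp only [Matrix.map_apply, wMatrix, Matrix.of_apply]
      split_ifs <;> push_cast <;> ring
    calc (M.mulVec u') v = ∑ j, M v j * u' j := rfl
      _ = ∑ j, -((((if v = j then a v else if G.Adj v j then 1 else 0 : ℤ)) * u j : ℤ) : ℚ) := by
          refine Finset.sum_congr rfl fun j _ => ?_
          rw [key j]; push_cast; ring
      _ = -(((∑ j, (if v = j then a v else if G.Adj v j then 1 else 0) * u j : ℤ) : ℚ)) := by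
          push_cast; rw [← Finset.sum_neg_distrib]
      _ = if v = E then (-1 : ℚ) else 0 := by
          rw [hv]; split_ifs <;> norm_num
  -- column E of the inverse is -u
  have hNcol : ∀ X : V, M⁻¹ X E = -(u' X) := by
    have h := congrArg (fun w => (M⁻¹).mulVec w) hMu
    simp only [Matrix.mulVec_mulVec, hNM, Matrix.one_mulVec] at h
    intro X
    have h2 := congrFun h X
    simp only [Matrix.mulVec, dotProduct, mul_ite, mul_neg_one, mul_zero,
      Finset.sum_ite_eq', Finset.mem_univ, if_true] at h2
    linarith
  -- symmetry of the inverse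
  have hNsymm : ∀ i j : V, M⁻¹ i j = M⁻¹ j i := by
    have hMT : M.transpose = M := by
      ext i j
      by_cases h : i = j
      · subst h; rfl
      · rw [hM]
        simp only [Matrix.transpose_apply, Matrix.map_apply, wMatrix, Matrix.of_apply,
          if_neg h, if_neg (Ne.symm h)]
        rw [G.adj_comm]
    intro i j
    have h := Matrix.transpose_nonsing_inv M
    rw [hMT] at h
    simpa using congrFun (congrFun h j) i
  have hv1 : ∀ X : V, ((M⁻¹).submatrix
      (Subtype.val : {v // v ∈ ({X} : Set V)} → V) Subtype.val).det = M⁻¹ X X := by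
    intro X
    rw [Matrix.det_unique]
    simp only [Matrix.submatrix_apply]
    rw [show ((default : {v // v ∈ ({X} : Set V)}) : V) = X from
      (default : {v // v ∈ ({X} : Set V)}).2]
  have hv2 : ((M⁻¹).submatrix (Subtype.val : {v // v ∈ ({P, Q} : Set V)} → V)
      Subtype.val).det = M⁻¹ P P * M⁻¹ Q Q - M⁻¹ P Q * M⁻¹ Q P := by
    rw [← Matrix.det_submatrix_equiv_self (pairEquiv P Q hPQ), Matrix.det_fin_two]
    simp only [Matrix.submatrix_apply, pairEquiv_zero_val, pairEquiv_one_val]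
  have hjacP := jac_minor M hMN ({P} : Set V)
  have hjacQ := jac_minor M hMN ({Q} : Set V)
  have hjacE := jac_minor M hMN ({E} : Set V)
  have hjacPQ := jac_minor M hMN ({P, Q} : Set V)
  rw [hdetM] at hjacP hjacQ hjacE hjacPQ
  -- cast the deleted determinants
  have hcast : ∀ s : Set V, ((wDetDel G a s : ℤ) : ℚ)
      = (M.submatrix (Subtype.val : {v // v ∉ s} → V) Subtype.val).det := by
    intro s; rw [wDetDel_cast, hM]
  have hjacP2 : (-1 : ℚ) * M⁻¹ P P = ((wDetDel G a ({P} : Set V) : ℤ) : ℚ) := by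
    rw [hcast]
    convert hjacP using 2
    exact (hv1 P).symm.trans (det_irrel _)
  have hjacQ2 : (-1 : ℚ) * M⁻¹ Q Q = ((wDetDel G a ({Q} : Set V) : ℤ) : ℚ) := by
    rw [hcast]
    convert hjacQ using 2
    exact (hv1 Q).symm.trans (det_irrel _)
  have hjacPQ2 : (-1 : ℚ) * (M⁻¹ P P * M⁻¹ Q Q - M⁻¹ P Q * M⁻¹ Q P)
      = ((wDetDel G a ({P, Q} : Set V) : ℤ) : ℚ) := by
    rw [hcast]
    convert hjacPQ using 2
    exact hv2.symm.trans (det_irrel _)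
  -- the component of P in the graph with E removed
  set Aset : Set V := {v : V | ∃ h : v ≠ E,
    (G.induce {v : V | v ≠ E}).Reachable ⟨v, h⟩ ⟨P, hP⟩} with hAset
  have hPA : P ∈ Aset := ⟨hP, SimpleGraph.Reachable.refl _⟩
  have hQA : Q ∉ Aset := fun hmem => hsep hmem.choose_spec.symm
  have hAE : ∀ v, v ∈ Aset → v ≠ E := fun v hv => hv.choose
  have hadjA : ∀ v w, v ∈ Aset → w ≠ E → G.Adj v w → w ∈ Aset := by
    rintro v w ⟨hv, hr⟩ hw hadj
    refine ⟨hw, SimpleGraph.Reachable.trans ?_ hr⟩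
    refine SimpleGraph.Adj.reachable ?_
    simpa [SimpleGraph.comap_adj] using hadj.symm
  have hMzero : ∀ v w, v ∈ Aset → w ∉ Aset → w ≠ E → M v w = 0 := by
    intro v w hv hw hwE
    have h1 : v ≠ w := fun h => hw (h ▸ hv)
    have h2 : ¬ G.Adj v w := fun h => hw (hadjA v w hv hwE h)
    rw [hM]
    simp [wMatrix, h1, h2]
  set Bset : Set V := {v : V | v ≠ E ∧ v ∉ Aset} with hBset
  let f : (↥Aset ⊕ ↥Bset) ≃ {v // v ∉ ({E} : Set V)} :=
  { toFun := Sum.elim (fun x => ⟨x.1, by simpa using hAE x.1 x.2⟩)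
      (fun x => ⟨x.1, by simpa using x.2.1⟩)
    invFun := fun v => if h : v.1 ∈ Aset then Sum.inl ⟨v.1, h⟩
      else Sum.inr ⟨v.1, ⟨by simpa using v.2, h⟩⟩
    left_inv := by
      rintro (⟨v, hv⟩ | ⟨v, hv⟩)
      · simp [hv]
      · simp [hv.2]
    right_inv := by
      rintro ⟨v, hv⟩
      by_cases h : v ∈ Aset <;> simp [h] }
  set KA := M.submatrix (Subtype.val : ↥Aset → V) Subtype.val with hKA
  set KB := M.submatrix (Subtype.val : ↥Bset → V) Subtype.val with hKB
  have hform : (M.submatrix (Subtype.val : {v // v ∉ ({E} : Set V)} → V) Subtype.val).submatrix f f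
      = Matrix.fromBlocks KA 0
          (M.submatrix (Subtype.val : ↥Bset → V) (Subtype.val : ↥Aset → V)) KB := by
    ext (i | i) (j | j)
    · rfl
    · exact hMzero i.1 j.1 i.2 j.2.2 j.2.1
    · rfl
    · rfl
  have hblock : (M.submatrix (Subtype.val : {v // v ∉ ({E} : Set V)} → V) Subtype.val).det
      = KA.det * KB.det := by
    rw [← Matrix.det_submatrix_equiv_self f, hform, Matrix.det_fromBlocks_zero₁₂]
  have hjacE2 : (-1 : ℚ) * M⁻¹ E E = KA.det * KB.det := by
    convert hjacE using 2
    · exact (hv1 E).symm.trans (det_irrel _)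
    · exact hblock.symm.trans (det_irrel _)
  have hNEE : M⁻¹ E E = -1 := by rw [hNcol E]; simp [hu', huE]
  have hdE1 : KA.det * KB.det = 1 := by
    rw [hNEE] at hjacE2
    linarith [hjacE2]
  have hKAdet : IsUnit KA.det := IsUnit.of_mul_eq_one _ hdE1
  -- kernel argument: N · Q agrees with a multiple of u on Aset
  set z : V → ℚ := fun v => M⁻¹ v Q - M⁻¹ E Q * u' v with hz
  have hzE : z E = 0 := by simp [hz, hu', huE]
  have hzrow : ∀ v, v ∈ Aset → ∑ j : V, M v j * z j = 0 := by
    intro v hv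
    have hvQ : v ≠ Q := fun h => hQA (h ▸ hv)
    have hvE : v ≠ E := hAE v hv
    have e1 : ∑ j : V, M v j * z j
        = (∑ j : V, M v j * M⁻¹ j Q) - M⁻¹ E Q * ∑ j : V, M v j * u' j := by
      rw [Finset.mul_sum, ← Finset.sum_sub_distrib]
      refine Finset.sum_congr rfl fun j _ => ?_
      simp [hz]; ring
    have e2 : ∑ j : V, M v j * M⁻¹ j Q = (1 : Matrix V V ℚ) v Q := by
      rw [← hMN, Matrix.mul_apply]
    have e3 : ∑ j : V, M v j * u' j = (M.mulVec u') v := rfl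
    rw [e1, e2, e3, hMu]
    simp [Matrix.one_apply, hvQ, hvE]
  have hker : KA.mulVec (fun j : ↥Aset => z j.1) = 0 := by
    funext i
    have hcond : ∀ x ∈ Finset.univ, M i.1 x * z x ≠ 0 → x ∈ Aset := by
      intro x _ hx
      by_contra hxA
      by_cases hxE : x = E
      · subst hxE; rw [hzE] at hx; simp at hx
      · rw [hMzero i.1 x i.2 hxA hxE] at hx; simp at hx
    have hsum : ∑ j : V, M i.1 j * z j = ∑ j : ↥Aset, M i.1 j.1 * z j.1 := by
      rw [← Finset.sum_filter_of_ne hcond]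
      exact Finset.sum_subtype _ (by simp) _
    have : (KA.mulVec fun j : ↥Aset => z j.1) i = ∑ j : ↥Aset, M i.1 j.1 * z j.1 := rfl
    rw [this, ← hsum]
    simpa using hzrow i.1 i.2
  have hzA : z P = 0 := by
    have h0 : (fun j : ↥Aset => z j.1) = 0 := by
      have h1 := congrArg (fun w => (KA⁻¹).mulVec w) hker
      simpa [Matrix.mulVec_mulVec, Matrix.nonsing_inv_mul KA hKAdet,
        Matrix.one_mulVec, Matrix.mulVec_zero] using h1
    exact congrFun h0 ⟨P, hPA⟩
  have hNPQ : M⁻¹ P Q = -(u' P * u' Q) := by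
    have hEQ : M⁻¹ E Q = -(u' Q) := by rw [hNsymm E Q]; exact hNcol Q
    have h1 : M⁻¹ P Q = M⁻¹ E Q * u' P := by
      have := hzA; simp [hz] at this; linarith
    rw [h1, hEQ]; ring
  -- final assembly
  have hgoal : ((wDetDel G a ({P, Q} : Set V) : ℤ) : ℚ)
      = (u' P) ^ 2 * (u' Q) ^ 2
        - ((wDetDel G a ({P} : Set V) : ℤ) : ℚ) * ((wDetDel G a ({Q} : Set V) : ℤ) : ℚ) := by
    rw [← hjacP2, ← hjacQ2, ← hjacPQ2]
    rw [hNPQ, hNsymm Q P, hNPQ]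
    ring
  have hfin := hgoal
  simp only [hu'] at hfin
  exact_mod_cast hfin
end

section
/- Under the rules b_R = b_P + 1 for attaching a new vertex R to P and b_R = b_P + b_Q for subdividing an edge (P,Q), starting from a single vertex with label -2, a vertex with label a ≥ 2 that has strictly larger label than all of its neighbors cannot be a parent of any of its neighbors; equivalently, in the construction sequence, all of its neighbors must have been created before it (so it is final). -/
open Finset

/-- A vertex `R` of a K-labeled tree is final if it can be created last: the
configuration is obtained from a reachable configuration by a single blow-up
operation creating `R`. -/
def IsFinal (V : Finset ℕ) (E : Finset (Sym2 ℕ)) (l : ℕ → ℤ) (R : ℕ) : Prop :=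
  ∃ V' E' l', KTree V' E' l' ∧ R ∉ V' ∧
    ((∃ P ∈ V', V = insert R V' ∧ E = insert s(P, R) E' ∧
        l = Function.update l' R (l' P + 1)) ∨
     (∃ P Q, s(P, Q) ∈ E' ∧ V = insert R V' ∧
        E = insert s(P, R) (insert s(R, Q) (E'.erase s(P, Q))) ∧
        l = Function.update l' R (l' P + l' Q)))

lemma ktree_edge_mem {V E l} (h : KTree V E l) :
    ∀ a b, s(a, b) ∈ E → a ∈ V ∧ b ∈ V := by
  induction h with
  | base => simp
  | attach P R ht hP hR ih =>
    intro a b hab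
    rw [Finset.mem_insert] at hab
    rcases hab with hab | hab
    · rw [Sym2.eq_iff] at hab
      rcases hab with ⟨rfl, rfl⟩ | ⟨rfl, rfl⟩ <;>
        simp [Finset.mem_insert, hP]
    · have := ih a b hab
      simp [Finset.mem_insert, this.1, this.2]
  | subdivide P Q R ht hPQ hR ih =>
    intro a b hab
    have hPm := ih P Q hPQ
    simp only [Finset.mem_insert, Finset.mem_erase] at hab
    rcases hab with hab | hab | ⟨-, hab⟩
    · rw [Sym2.eq_iff] at hab
      rcases hab with ⟨rfl, rfl⟩ | ⟨rfl, rfl⟩ <;>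
        simp [Finset.mem_insert, hPm.1, hPm.2]
    · rw [Sym2.eq_iff] at hab
      rcases hab with ⟨rfl, rfl⟩ | ⟨rfl, rfl⟩ <;>
        simp [Finset.mem_insert, hPm.1, hPm.2]
    · have := ih a b hab
      simp [Finset.mem_insert, this.1, this.2]

lemma ktree_good {V E l} (h : KTree V E l) :
    ∀ a b, s(a, b) ∈ E →
      (1 ≤ l a ∧ 1 ≤ l b) ∨ (l a ≤ 0 ∧ l b ≤ 0) ∨
      (l a = 0 ∧ l b = 1) ∨ (l a = 1 ∧ l b = 0) := by
  induction h with
  | base => simp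
  | attach P R ht hP hR ih =>
    intro a b hab
    have hPR : P ≠ R := fun h => hR (h ▸ hP)
    rw [Finset.mem_insert] at hab
    rcases hab with hab | hab
    · rw [Sym2.eq_iff] at hab
      rcases hab with ⟨rfl, rfl⟩ | ⟨rfl, rfl⟩ <;>
        simp only [Function.update_self, Function.update_of_ne hPR] <;> omega
    · have hm := ktree_edge_mem ht a b hab
      have ha : a ≠ R := fun h => hR (h ▸ hm.1)
      have hb : b ≠ R := fun h => hR (h ▸ hm.2)
      simpa only [Function.update_of_ne ha, Function.update_of_ne hb] using ih a b hab
  | subdivide P Q R ht hPQ hR ih =>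
    intro a b hab
    have hm := ktree_edge_mem ht P Q hPQ
    have hPR : P ≠ R := fun h => hR (h ▸ hm.1)
    have hQR : Q ≠ R := fun h => hR (h ▸ hm.2)
    have hgood := ih P Q hPQ
    simp only [Finset.mem_insert, Finset.mem_erase] at hab
    rcases hab with hab | hab | ⟨-, hab⟩
    · rw [Sym2.eq_iff] at hab
      rcases hab with ⟨rfl, rfl⟩ | ⟨rfl, rfl⟩ <;>
        simp only [Function.update_self, Function.update_of_ne hPR,
          Function.update_of_ne hQR] <;> omega
    · rw [Sym2.eq_iff] at hab
      rcases hab with ⟨rfl, rfl⟩ | ⟨rfl, rfl⟩ <;>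
        simp only [Function.update_self, Function.update_of_ne hPR,
          Function.update_of_ne hQR] <;> omega
    · have hm2 := ktree_edge_mem ht a b hab
      have ha : a ≠ R := fun h => hR (h ▸ hm2.1)
      have hb : b ≠ R := fun h => hR (h ▸ hm2.2)
      simpa only [Function.update_of_ne ha, Function.update_of_ne hb] using ih a b hab

lemma ktree_pos_nbr {V E l} (h : KTree V E l) {a b} (hab : s(a, b) ∈ E)
    (ha : 2 ≤ l a) : 1 ≤ l b := by
  rcases ktree_good h a b hab with h' | h' | h' | h' <;> omega

lemma isfinal_attach {V E l P} (hfin : IsFinal V E l P) (P' R : ℕ)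
    (hP' : P' ∈ V) (hR : R ∉ V) (hne : P ≠ P') (hRP : R ≠ P) :
    IsFinal (insert R V) (insert s(P', R) E) (Function.update l R (l P' + 1)) P := by
  obtain ⟨V₂, E₂, l₂, ht, hPV₂, hcase⟩ := hfin
  rcases hcase with ⟨P₀, hP₀, rfl, rfl, rfl⟩ | ⟨P₀, Q₀, hPQ₀, rfl, rfl, rfl⟩
  · -- last op for P was attach of P to P₀
    have hP'V₂ : P' ∈ V₂ := by
      rcases Finset.mem_insert.mp hP' with h | h
      · exact absurd h.symm hne
      · exact h
    have hRV₂ : R ∉ V₂ := fun h => hR (Finset.mem_insert_of_mem h)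
    have hP₀R : P₀ ≠ R := fun h => hRV₂ (h ▸ hP₀)
    refine ⟨insert R V₂, insert s(P', R) E₂, Function.update l₂ R (l₂ P' + 1),
      KTree.attach P' R ht hP'V₂ hRV₂,
      by simp [Finset.mem_insert, hRP.symm, hPV₂],
      Or.inl ⟨P₀, Finset.mem_insert_of_mem hP₀, ?_, ?_, ?_⟩⟩
    · exact Finset.insert_comm _ _ _
    · exact Finset.insert_comm _ _ _
    · rw [Function.update_of_ne hne.symm, Function.update_of_ne hP₀R,
        Function.update_comm hRP]
  · -- last op for P was subdivision of s(P₀, Q₀)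
    have hP'V₂ : P' ∈ V₂ := by
      rcases Finset.mem_insert.mp hP' with h | h
      · exact absurd h.symm hne
      · exact h
    have hRV₂ : R ∉ V₂ := fun h => hR (Finset.mem_insert_of_mem h)
    have hm := ktree_edge_mem ht P₀ Q₀ hPQ₀
    have hP₀R : P₀ ≠ R := fun h => hRV₂ (h ▸ hm.1)
    have hQ₀R : Q₀ ≠ R := fun h => hRV₂ (h ▸ hm.2)
    refine ⟨insert R V₂, insert s(P', R) E₂, Function.update l₂ R (l₂ P' + 1),
      KTree.attach P' R ht hP'V₂ hRV₂,
      by simp [Finset.mem_insert, hRP.symm, hPV₂],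
      Or.inr ⟨P₀, Q₀, Finset.mem_insert_of_mem hPQ₀, ?_, ?_, ?_⟩⟩
    · exact Finset.insert_comm _ _ _
    · have hne1 : s(P', R) ≠ s(P₀, Q₀) := by
        intro h
        rw [Sym2.eq_iff] at h
        rcases h with ⟨h1, h2⟩ | ⟨h1, h2⟩
        · exact hQ₀R h2.symm
        · exact hP₀R h2.symm
      rw [Finset.erase_insert_of_ne hne1]
      ext e
      simp only [Finset.mem_insert]
      tauto
    · rw [Function.update_of_ne hne.symm, Function.update_of_ne hP₀R,
        Function.update_of_ne hQ₀R, Function.update_comm hRP]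

lemma sym2_ne_of_ne {x y u v : ℕ} (h1 : x ≠ u) (h2 : x ≠ v) : s(x, y) ≠ s(u, v) := by
  intro h; rw [Sym2.eq_iff] at h; tauto

lemma sym2_ne_of_ne' {x y u v : ℕ} (h1 : y ≠ u) (h2 : y ≠ v) : s(x, y) ≠ s(u, v) := by
  intro h; rw [Sym2.eq_iff] at h; tauto

lemma isfinal_subdivide {V E l P} (hfin : IsFinal V E l P) (P' Q' R : ℕ)
    (hedge : s(P', Q') ∈ E) (hR : R ∉ V) (hne1 : P ≠ P') (hne2 : P ≠ Q') (hRP : R ≠ P) :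
    IsFinal (insert R V) (insert s(P', R) (insert s(R, Q') (E.erase s(P', Q'))))
      (Function.update l R (l P' + l Q')) P := by
  obtain ⟨V₂, E₂, l₂, ht, hPV₂, hcase⟩ := hfin
  rcases hcase with ⟨P₀, hP₀, rfl, rfl, rfl⟩ | ⟨P₀, Q₀, hPQ₀, rfl, rfl, rfl⟩
  · -- last op for P was attach to P₀
    have hRV₂ : R ∉ V₂ := fun h => hR (Finset.mem_insert_of_mem h)
    have hsne : s(P₀, P) ≠ s(P', Q') := sym2_ne_of_ne' hne1 hne2
    have hedge₂ : s(P', Q') ∈ E₂ := by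
      rcases Finset.mem_insert.mp hedge with h | h
      · exact absurd h.symm hsne
      · exact h
    have hm := ktree_edge_mem ht P' Q' hedge₂
    have hP₀R : P₀ ≠ R := fun h => hRV₂ (h ▸ hP₀)
    refine ⟨insert R V₂, _, _, KTree.subdivide P' Q' R ht hedge₂ hRV₂,
      by simp [Finset.mem_insert, hRP.symm, hPV₂],
      Or.inl ⟨P₀, Finset.mem_insert_of_mem hP₀, ?_, ?_, ?_⟩⟩
    · exact Finset.insert_comm _ _ _
    · rw [Finset.erase_insert_of_ne hsne]
      ext e
      simp only [Finset.mem_insert]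
      tauto
    · rw [Function.update_of_ne hne1.symm, Function.update_of_ne hne2.symm,
        Function.update_of_ne hP₀R, Function.update_comm hRP]
  · -- last op for P was subdivision of s(P₀, Q₀)
    have hRV₂ : R ∉ V₂ := fun h => hR (Finset.mem_insert_of_mem h)
    have hsne1 : s(P₀, P) ≠ s(P', Q') := sym2_ne_of_ne' hne1 hne2
    have hsne2 : s(P, Q₀) ≠ s(P', Q') := sym2_ne_of_ne hne1 hne2
    have hedge₂' : s(P', Q') ∈ E₂.erase s(P₀, Q₀) := by
      rcases Finset.mem_insert.mp hedge with h | h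
      · exact absurd h.symm hsne1
      · rcases Finset.mem_insert.mp h with h | h
        · exact absurd h.symm hsne2
        · exact h
    have hedge₂ : s(P', Q') ∈ E₂ := Finset.mem_of_mem_erase hedge₂'
    have hsne3 : s(P', Q') ≠ s(P₀, Q₀) := (Finset.mem_erase.mp hedge₂').1
    have hm := ktree_edge_mem ht P₀ Q₀ hPQ₀
    have hP₀R : P₀ ≠ R := fun h => hRV₂ (h ▸ hm.1)
    have hQ₀R : Q₀ ≠ R := fun h => hRV₂ (h ▸ hm.2)
    have a3 : s(P', R) ≠ s(P₀, Q₀) := sym2_ne_of_ne' (fun h => hP₀R h.symm) (fun h => hQ₀R h.symm)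
    have a4 : s(R, Q') ≠ s(P₀, Q₀) := sym2_ne_of_ne (fun h => hP₀R h.symm) (fun h => hQ₀R h.symm)
    refine ⟨insert R V₂, _, _, KTree.subdivide P' Q' R ht hedge₂ hRV₂,
      by simp [Finset.mem_insert, hRP.symm, hPV₂],
      Or.inr ⟨P₀, Q₀,
        Finset.mem_insert_of_mem (Finset.mem_insert_of_mem
          (Finset.mem_erase.mpr ⟨hsne3.symm, hPQ₀⟩)), ?_, ?_, ?_⟩⟩
    · exact Finset.insert_comm _ _ _
    · rw [Finset.erase_insert_of_ne hsne1, Finset.erase_insert_of_ne hsne2,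
        Finset.erase_insert_of_ne a3, Finset.erase_insert_of_ne a4,
        Finset.erase_right_comm]
      ext e
      simp only [Finset.mem_insert]
      tauto
    · rw [Function.update_of_ne hne1.symm, Function.update_of_ne hne2.symm,
        Function.update_of_ne hP₀R, Function.update_of_ne hQ₀R,
        Function.update_comm hRP]

/-- Proposition 2.9: a vertex whose label is at least `2` and strictly exceeds
the labels of all of its neighbors is final. -/
theorem ktree_local_max_final {V : Finset ℕ} {E : Finset (Sym2 ℕ)} {l : ℕ → ℤ}
    (h : KTree V E l) (P : ℕ) (hP : P ∈ V) (h2 : 2 ≤ l P)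
    (hmax : ∀ Q, s(P, Q) ∈ E → l Q < l P) :
    IsFinal V E l P := by
  revert hP h2 hmax
  induction h with
  | base =>
    intro hP h2 _
    norm_num at h2
  | attach P' R ht hmem hR ih =>
    rename_i V' E' l'
    intro hP h2 hmax
    rcases eq_or_ne P R with rfl | hPR
    · exact ⟨_, _, _, ht, hR, Or.inl ⟨P', hmem, rfl, rfl, rfl⟩⟩
    · have hPV : P ∈ V' := (Finset.mem_insert.mp hP).resolve_left hPR
      have h2' : 2 ≤ l' P := by rwa [Function.update_of_ne hPR] at h2
      have hmax' : ∀ Q, s(P, Q) ∈ E' → l' Q < l' P := by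
        intro Q hQ
        have hQV := (ktree_edge_mem ht P Q hQ).2
        have hQR : Q ≠ R := fun h => hR (h ▸ hQV)
        have := hmax Q (Finset.mem_insert_of_mem hQ)
        rwa [Function.update_of_ne hQR, Function.update_of_ne hPR] at this
      have hPP' : P ≠ P' := by
        intro h; subst h
        have h1 := hmax R (Finset.mem_insert_self _ _)
        rw [Function.update_self, Function.update_of_ne hPR] at h1
        omega
      exact isfinal_attach (ih hPV h2' hmax') P' R hmem hR hPP' (fun h => hPR h.symm)
  | subdivide P' Q' R ht hedge hR ih =>
    rename_i V' E' l'
    intro hP h2 hmax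
    rcases eq_or_ne P R with rfl | hPR
    · exact ⟨_, _, _, ht, hR, Or.inr ⟨P', Q', hedge, rfl, rfl, rfl⟩⟩
    · have hPV : P ∈ V' := (Finset.mem_insert.mp hP).resolve_left hPR
      have h2' : 2 ≤ l' P := by rwa [Function.update_of_ne hPR] at h2
      have hm := ktree_edge_mem ht P' Q' hedge
      have hPP' : P ≠ P' := by
        intro h; subst h
        have h1 := hmax R (Finset.mem_insert_self _ _)
        rw [Function.update_self, Function.update_of_ne hPR] at h1
        have h3 : 1 ≤ l' Q' := ktree_pos_nbr ht hedge h2'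
        omega
      have hPQ' : P ≠ Q' := by
        intro h; subst h
        have hmem2 : s(P, R) ∈ insert s(P', R) (insert s(R, P) (E'.erase s(P', P))) :=
          Finset.mem_insert_of_mem (by rw [Sym2.eq_swap]; exact Finset.mem_insert_self _ _)
        have h1 := hmax R hmem2
        rw [Function.update_self, Function.update_of_ne hPR] at h1
        have hedge' : s(P, P') ∈ E' := by rw [Sym2.eq_swap]; exact hedge
        have h3 : 1 ≤ l' P' := ktree_pos_nbr ht hedge' h2'
        omega
      have hmax' : ∀ Q, s(P, Q) ∈ E' → l' Q < l' P := by
        intro Q hQ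
        have hQV := (ktree_edge_mem ht P Q hQ).2
        have hQR : Q ≠ R := fun h => hR (h ▸ hQV)
        have hne : s(P, Q) ≠ s(P', Q') := sym2_ne_of_ne hPP' hPQ'
        have hmem2 : s(P, Q) ∈ insert s(P', R) (insert s(R, Q') (E'.erase s(P', Q'))) :=
          Finset.mem_insert_of_mem (Finset.mem_insert_of_mem
            (Finset.mem_erase.mpr ⟨hne, hQ⟩))
        have := hmax Q hmem2
        rwa [Function.update_of_ne hQR, Function.update_of_ne hPR] at this
      exact isfinal_subdivide (ih hPV h2' hmax') P' Q' R hedge hR hPP' hPQ'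
        (fun h => hPR h.symm)
end

section
/- In the labeled tree construction (start from one vertex labeled -2; attach a leaf labeled a+1 to a vertex labeled a; or subdivide an edge with endpoint labels a, b, giving the middle vertex label a+b), a vertex with label 1 is final (i.e., admits a construction order in which it is created last) if and only if either it has exactly one neighbor, which has label 0, or it has exactly two neighbors, with labels 1 and 0. -/
open Finset

lemma ktree_edge_spec {V E l} (h : KTree V E l) :
    ∀ a b, s(a, b) ∈ E → a ∈ V ∧ b ∈ V ∧ a ≠ b := by
  induction h with
  | base => simp
  | @attach V' E' l' P R h hP hR ih =>
    intro a b hab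
    rcases Finset.mem_insert.1 hab with hab | hab
    · rw [Sym2.eq_iff] at hab
      rcases hab with ⟨rfl, rfl⟩ | ⟨rfl, rfl⟩
      · exact ⟨mem_insert_of_mem hP, mem_insert_self _ _, fun hh => hR (hh ▸ hP)⟩
      · exact ⟨mem_insert_self _ _, mem_insert_of_mem hP, fun hh => hR (hh ▸ hP)⟩
    · obtain ⟨ha, hb, hne⟩ := ih a b hab
      exact ⟨mem_insert_of_mem ha, mem_insert_of_mem hb, hne⟩
  | @subdivide V' E' l' P Q R h hPQ hR ih =>
    obtain ⟨hPV, hQV, hPQne⟩ := ih P Q hPQ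
    intro a b hab
    rcases Finset.mem_insert.1 hab with hab | hab
    · rw [Sym2.eq_iff] at hab
      rcases hab with ⟨rfl, rfl⟩ | ⟨rfl, rfl⟩
      · exact ⟨mem_insert_of_mem hPV, mem_insert_self _ _, fun hh => hR (hh ▸ hPV)⟩
      · exact ⟨mem_insert_self _ _, mem_insert_of_mem hPV, fun hh => hR (hh ▸ hPV)⟩
    rcases Finset.mem_insert.1 hab with hab | hab
    · rw [Sym2.eq_iff] at hab
      rcases hab with ⟨rfl, rfl⟩ | ⟨rfl, rfl⟩
      · exact ⟨mem_insert_self _ _, mem_insert_of_mem hQV, fun hh => hR (hh ▸ hQV)⟩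
      · exact ⟨mem_insert_of_mem hQV, mem_insert_self _ _, fun hh => hR (hh ▸ hQV)⟩
    · obtain ⟨ha, hb, hne⟩ := ih a b (Finset.mem_of_mem_erase hab)
      exact ⟨mem_insert_of_mem ha, mem_insert_of_mem hb, hne⟩

lemma ktree_edge_mul {V E l} (h : KTree V E l) :
    ∀ a b, s(a, b) ∈ E → 0 ≤ l a * l b := by
  induction h with
  | base => simp
  | @attach V' E' l' P R h hP hR ih =>
    have hspec := ktree_edge_spec h
    intro a b hab
    have hPR : P ≠ R := fun hh => hR (hh ▸ hP)
    rcases Finset.mem_insert.1 hab with hab | hab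
    · rw [Sym2.eq_iff] at hab
      rcases hab with ⟨rfl, rfl⟩ | ⟨rfl, rfl⟩ <;>
        simp only [Function.update_self, Function.update_of_ne hPR] <;>
        nlinarith [mul_self_nonneg (l' a), mul_self_nonneg (l' b)]
    · obtain ⟨ha, hb, -⟩ := hspec a b hab
      have haR : a ≠ R := fun hh => hR (hh ▸ ha)
      have hbR : b ≠ R := fun hh => hR (hh ▸ hb)
      simpa [Function.update_of_ne haR, Function.update_of_ne hbR] using ih a b hab
  | @subdivide V' E' l' P Q R h hPQ hR ih =>
    have hspec := ktree_edge_spec h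
    obtain ⟨hPV, hQV, -⟩ := hspec P Q hPQ
    have hPR : P ≠ R := fun hh => hR (hh ▸ hPV)
    have hQR : Q ≠ R := fun hh => hR (hh ▸ hQV)
    have hpq := ih P Q hPQ
    intro a b hab
    rcases Finset.mem_insert.1 hab with hab | hab
    · rw [Sym2.eq_iff] at hab
      rcases hab with ⟨rfl, rfl⟩ | ⟨rfl, rfl⟩ <;>
        simp only [Function.update_self, Function.update_of_ne hPR] <;> nlinarith [hpq, mul_self_nonneg (l' a), mul_self_nonneg (l' b)]
    rcases Finset.mem_insert.1 hab with hab | hab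
    · rw [Sym2.eq_iff] at hab
      rcases hab with ⟨rfl, rfl⟩ | ⟨rfl, rfl⟩ <;>
        simp only [Function.update_self, Function.update_of_ne hQR] <;> nlinarith [hpq, mul_self_nonneg (l' a), mul_self_nonneg (l' b)]
    · have hab' := Finset.mem_of_mem_erase hab
      obtain ⟨ha, hb, -⟩ := hspec a b hab'
      have haR : a ≠ R := fun hh => hR (hh ▸ ha)
      have hbR : b ≠ R := fun hh => hR (hh ▸ hb)
      simpa [Function.update_of_ne haR, Function.update_of_ne hbR] using ih a b hab'

lemma ktree_zero_nbr {V E l} (h : KTree V E l) :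
    ∀ p q r, l p = 1 → s(p, q) ∈ E → s(p, r) ∈ E → l q = 0 → l r = 0 → q = r := by
  induction h with
  | base => simp
  | @attach V' E' l' P R h hP hR ih =>
    have hspec := ktree_edge_spec h
    have hPR : P ≠ R := fun hh => hR (hh ▸ hP)
    intro p q r hp hpq hpr hq hr
    by_cases hpR : p = R
    · subst hpR
      have key : ∀ x, s(p, x) ∈ insert s(P, p) E' → x = P := by
        intro x hx
        rcases Finset.mem_insert.1 hx with hx | hx
        · rw [Sym2.eq_iff] at hx; tauto
        · exact absurd (hspec p x hx).1 hR
      rw [key q hpq, key r hpr]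
    · have hp' : l' p = 1 := by
        rw [Function.update_of_ne hpR] at hp; exact hp
      have key : ∀ x, s(p, x) ∈ insert s(P, R) E' →
          Function.update l' R (l' P + 1) x = 0 → s(p, x) ∈ E' ∧ x ≠ R := by
        intro x hx hx0
        rcases Finset.mem_insert.1 hx with hx | hx
        · rw [Sym2.eq_iff] at hx
          rcases hx with ⟨rfl, rfl⟩ | ⟨rfl, rfl⟩
          · rw [Function.update_self] at hx0; rw [hp'] at hx0; omega
          · exact absurd rfl hpR
        · have hxR : x ≠ R := fun hh => hR (hh ▸ (hspec p x hx).2.1)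
          exact ⟨hx, hxR⟩
      obtain ⟨hq', hqR⟩ := key q hpq hq
      obtain ⟨hr', hrR⟩ := key r hpr hr
      rw [Function.update_of_ne hqR] at hq
      rw [Function.update_of_ne hrR] at hr
      exact ih p q r hp' hq' hr' hq hr
  | @subdivide V' E' l' P Q R h hPQ hR ih =>
    have hspec := ktree_edge_spec h
    obtain ⟨hPV, hQV, hPQne⟩ := hspec P Q hPQ
    have hPR : P ≠ R := fun hh => hR (hh ▸ hPV)
    have hQR : Q ≠ R := fun hh => hR (hh ▸ hQV)
    have hmul := ktree_edge_mul h P Q hPQ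
    intro p q r hp hpq hpr hq hr
    by_cases hpR : p = R
    · subst hpR
      have hp1 : l' P + l' Q = 1 := by rw [Function.update_self] at hp; exact hp
      have key : ∀ x, s(p, x) ∈ insert s(P, p) (insert s(p, Q) (E'.erase s(P, Q))) →
          x = P ∨ x = Q := by
        intro x hx
        rcases Finset.mem_insert.1 hx with hx | hx
        · rw [Sym2.eq_iff] at hx; tauto
        rcases Finset.mem_insert.1 hx with hx | hx
        · rw [Sym2.eq_iff] at hx; tauto
        · exact absurd (hspec p x (Finset.mem_of_mem_erase hx)).1 hR
      have hqv := key q hpq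
      have hrv := key r hpr
      rcases hqv with rfl | rfl <;> rcases hrv with rfl | rfl <;> try rfl
      · rw [Function.update_of_ne hPR] at hq
        rw [Function.update_of_ne hQR] at hr
        omega
      · rw [Function.update_of_ne hPR] at hr
        rw [Function.update_of_ne hQR] at hq
        omega
    · have hp' : l' p = 1 := by rw [Function.update_of_ne hpR] at hp; exact hp
      have key : ∀ x, s(p, x) ∈ insert s(P, R) (insert s(R, Q) (E'.erase s(P, Q))) →
          Function.update l' R (l' P + l' Q) x = 0 → s(p, x) ∈ E' ∧ x ≠ R := by
        intro x hx hx0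
        by_cases hxR : x = R
        · subst hxR
          rw [Function.update_self] at hx0
          have hpPQ : p = P ∨ p = Q := by
            rcases Finset.mem_insert.1 hx with hx | hx
            · rw [Sym2.eq_iff] at hx; tauto
            rcases Finset.mem_insert.1 hx with hx | hx
            · rw [Sym2.eq_iff] at hx; tauto
            · exact absurd (hspec p x (Finset.mem_of_mem_erase hx)).2.1 hR
          rcases hpPQ with rfl | rfl
          · rw [hp'] at hx0 hmul; nlinarith
          · rw [hp'] at hx0; rw [mul_comm] at hmul; rw [hp'] at hmul; nlinarith
        · refine ⟨?_, hxR⟩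
          rcases Finset.mem_insert.1 hx with hx | hx
          · rw [Sym2.eq_iff] at hx; tauto
          rcases Finset.mem_insert.1 hx with hx | hx
          · rw [Sym2.eq_iff] at hx; tauto
          · exact Finset.mem_of_mem_erase hx
      obtain ⟨hq', hqR⟩ := key q hpq hq
      obtain ⟨hr', hrR⟩ := key r hpr hr
      rw [Function.update_of_ne hqR] at hq
      rw [Function.update_of_ne hrR] at hr
      exact ih p q r hp' hq' hr' hq hr

lemma sym2_ne_of_not_mem {a b c d : ℕ} (h1 : b ≠ c) (h2 : b ≠ d) : s(a, b) ≠ s(c, d) := by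
  intro h; rw [Sym2.eq_iff] at h; tauto

lemma isfinal_lift_attach {V E l} {P : ℕ} (hf : IsFinal V E l P) {P₀ R : ℕ}
    (hP₀ : P₀ ∈ V) (hne : P₀ ≠ P) (hR : R ∉ V) (hRP : R ≠ P) :
    IsFinal (insert R V) (insert s(P₀, R) E) (Function.update l R (l P₀ + 1)) P := by
  obtain ⟨V', E', l', ht, hPV', hcase⟩ := hf
  have hspec := ktree_edge_spec ht
  have hV : V = insert P V' := by rcases hcase with ⟨A, _, hV, _⟩ | ⟨A, B, _, hV, _⟩ <;> exact hV
  have hP₀V' : P₀ ∈ V' := by rw [hV] at hP₀; rcases Finset.mem_insert.1 hP₀ with h | h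
                             · exact absurd h hne
                             · exact h
  have hRV' : R ∉ V' := fun hh => hR (hV ▸ Finset.mem_insert_of_mem hh)
  refine ⟨insert R V', insert s(P₀, R) E', Function.update l' R (l' P₀ + 1),
    KTree.attach P₀ R ht hP₀V' hRV', by simp [hPV', Ne.symm hRP], ?_⟩
  rcases hcase with ⟨A, hA, hV', hE, hl⟩ | ⟨A, B, hAB, hV', hE, hl⟩
  · subst hV' hE hl
    have hAR : A ≠ R := fun hh => hRV' (hh ▸ hA)
    have hAP : A ≠ P := fun hh => hPV' (hh ▸ hA)
    refine Or.inl ⟨A, Finset.mem_insert_of_mem hA, Finset.insert_comm _ _ _,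
      Finset.insert_comm _ _ _, ?_⟩
    funext x
    simp only [Function.update_apply]
    split_ifs <;> simp_all
  · subst hV' hE hl
    obtain ⟨hAV, hBV, hABne⟩ := hspec A B hAB
    have hAR : A ≠ R := fun hh => hRV' (hh ▸ hAV)
    have hBR : B ≠ R := fun hh => hRV' (hh ▸ hBV)
    have hAP : A ≠ P := fun hh => hPV' (hh ▸ hAV)
    have hBP : B ≠ P := fun hh => hPV' (hh ▸ hBV)
    have hne1 : s(P₀, R) ≠ s(A, B) := sym2_ne_of_not_mem hAR.symm hBR.symm
    refine Or.inr ⟨A, B, Finset.mem_insert_of_mem hAB, Finset.insert_comm _ _ _, ?_, ?_⟩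
    · rw [Finset.erase_insert_of_ne hne1, Finset.insert_comm s(P₀, R) s(A, P),
        Finset.insert_comm s(P₀, R) s(P, B)]
    · funext x
      simp only [Function.update_apply]
      split_ifs <;> simp_all

lemma sym2_ne' {a b c d : ℕ} (h1 : a ≠ c) (h2 : a ≠ d) : s(a, b) ≠ s(c, d) := by
  intro h; rw [Sym2.eq_iff] at h; tauto

lemma isfinal_lift_subdivide {V E l} {P : ℕ} (hf : IsFinal V E l P) {P₀ Q₀ R : ℕ}
    (hE₀ : s(P₀, Q₀) ∈ E) (hnP : P ≠ P₀) (hnQ : P ≠ Q₀) (hR : R ∉ V) (hRP : R ≠ P) :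
    IsFinal (insert R V) (insert s(P₀, R) (insert s(R, Q₀) (E.erase s(P₀, Q₀))))
      (Function.update l R (l P₀ + l Q₀)) P := by
  obtain ⟨V', E', l', ht, hPV', hcase⟩ := hf
  have hspec := ktree_edge_spec ht
  have hV : V = insert P V' := by rcases hcase with ⟨A, _, hV, _⟩ | ⟨A, B, _, hV, _⟩ <;> exact hV
  have hRV' : R ∉ V' := fun hh => hR (hV ▸ Finset.mem_insert_of_mem hh)
  rcases hcase with ⟨A, hA, hV', hE, hl⟩ | ⟨A, B, hAB, hV', hE, hl⟩
  · subst hV' hE hl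
    have hAR : A ≠ R := fun hh => hRV' (hh ▸ hA)
    have hAP : A ≠ P := fun hh => hPV' (hh ▸ hA)
    have hne2 : s(A, P) ≠ s(P₀, Q₀) := sym2_ne_of_not_mem hnP hnQ
    have hE₀' : s(P₀, Q₀) ∈ E' := by
      rcases Finset.mem_insert.1 hE₀ with h | h
      · exact absurd h.symm hne2
      · exact h
    obtain ⟨hP₀V, hQ₀V, hP₀Q₀⟩ := hspec P₀ Q₀ hE₀'
    have hP₀R : P₀ ≠ R := fun hh => hRV' (hh ▸ hP₀V)
    have hQ₀R : Q₀ ≠ R := fun hh => hRV' (hh ▸ hQ₀V)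
    have hP₀P : P₀ ≠ P := Ne.symm hnP
    have hQ₀P : Q₀ ≠ P := Ne.symm hnQ
    refine ⟨insert R V', insert s(P₀, R) (insert s(R, Q₀) (E'.erase s(P₀, Q₀))),
      Function.update l' R (l' P₀ + l' Q₀),
      KTree.subdivide P₀ Q₀ R ht hE₀' hRV', by simp [hPV', Ne.symm hRP],
      Or.inl ⟨A, Finset.mem_insert_of_mem hA, Finset.insert_comm _ _ _, ?_, ?_⟩⟩
    · rw [Finset.erase_insert_of_ne hne2, Finset.insert_comm s(R, Q₀) s(A, P),
        Finset.insert_comm s(P₀, R) s(A, P)]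
    · rw [Function.update_of_ne hP₀P, Function.update_of_ne hQ₀P, Function.update_of_ne hAR,
        Function.update_comm (Ne.symm hRP)]
  · subst hV' hE hl
    obtain ⟨hAV, hBV, hABne⟩ := hspec A B hAB
    have hAR : A ≠ R := fun hh => hRV' (hh ▸ hAV)
    have hBR : B ≠ R := fun hh => hRV' (hh ▸ hBV)
    have hAP : A ≠ P := fun hh => hPV' (hh ▸ hAV)
    have hBP : B ≠ P := fun hh => hPV' (hh ▸ hBV)
    have hneAP : s(A, P) ≠ s(P₀, Q₀) := sym2_ne_of_not_mem hnP hnQ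
    have hnePB : s(P, B) ≠ s(P₀, Q₀) := sym2_ne' hnP hnQ
    have hE₀'' : s(P₀, Q₀) ∈ (E'.erase s(A, B)) := by
      rcases Finset.mem_insert.1 hE₀ with h | h
      · exact absurd h.symm hneAP
      rcases Finset.mem_insert.1 h with h | h
      · exact absurd h.symm hnePB
      · exact h
    obtain ⟨hnePQ_AB, hE₀'⟩ := Finset.mem_erase.1 hE₀''
    obtain ⟨hP₀V, hQ₀V, hP₀Q₀⟩ := hspec P₀ Q₀ hE₀'
    have hP₀R : P₀ ≠ R := fun hh => hRV' (hh ▸ hP₀V)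
    have hQ₀R : Q₀ ≠ R := fun hh => hRV' (hh ▸ hQ₀V)
    have hP₀P : P₀ ≠ P := Ne.symm hnP
    have hQ₀P : Q₀ ≠ P := Ne.symm hnQ
    have hnePR_AB : s(P₀, R) ≠ s(A, B) := sym2_ne_of_not_mem hAR.symm hBR.symm
    have hneRQ_AB : s(R, Q₀) ≠ s(A, B) := sym2_ne' hAR.symm hBR.symm
    refine ⟨insert R V', insert s(P₀, R) (insert s(R, Q₀) (E'.erase s(P₀, Q₀))),
      Function.update l' R (l' P₀ + l' Q₀),
      KTree.subdivide P₀ Q₀ R ht hE₀' hRV', by simp [hPV', Ne.symm hRP],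
      Or.inr ⟨A, B, ?_, Finset.insert_comm _ _ _, ?_, ?_⟩⟩
    · exact Finset.mem_insert_of_mem (Finset.mem_insert_of_mem
        (Finset.mem_erase.2 ⟨fun hh => hnePQ_AB hh.symm, hAB⟩))
    · rw [Finset.erase_insert_of_ne hneAP, Finset.erase_insert_of_ne hnePB,
        Finset.erase_insert_of_ne hnePR_AB, Finset.erase_insert_of_ne hneRQ_AB]
      ext e
      simp only [Finset.mem_insert, Finset.mem_erase]
      tauto
    · rw [Function.update_of_ne hP₀P, Function.update_of_ne hQ₀P, Function.update_of_ne hAR,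
        Function.update_of_ne hBR, Function.update_comm (Ne.symm hRP)]

lemma ktree_backward {V E l} (h : KTree V E l) :
    ∀ P, P ∈ V → l P = 1 →
      ((∃ Q, l Q = 0 ∧ {x : ℕ | s(P, x) ∈ E} = {Q}) ∨
       (∃ Q R, Q ≠ R ∧ l Q = 0 ∧ l R = 1 ∧ {x : ℕ | s(P, x) ∈ E} = {Q, R})) →
      IsFinal V E l P := by
  induction h with
  | base =>
    intro P hP h1 _
    exact absurd h1 (by norm_num)
  | @attach V' E' l' P₀ R ht hP₀ hR ih =>
    intro P hP h1 hc
    have hspec := ktree_edge_spec ht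
    by_cases hPR : P = R
    · subst hPR; exact ⟨V', E', l', ht, hR, Or.inl ⟨P₀, hP₀, rfl, rfl, rfl⟩⟩
    have hPV' : P ∈ V' := by
      rcases Finset.mem_insert.1 hP with h | h
      · exact absurd h hPR
      · exact h
    have h1' : l' P = 1 := by rwa [Function.update_of_ne hPR] at h1
    by_cases hPP₀ : P₀ = P
    · exfalso
      subst hPP₀
      have hRnbr : R ∈ {x : ℕ | s(P₀, x) ∈ insert s(P₀, R) E'} := by
        simp [Set.mem_setOf_eq]
      have hRlab : Function.update l' R (l' P₀ + 1) R = l' P₀ + 1 := Function.update_self _ _ _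
      rcases hc with ⟨Q, hQ0, hset⟩ | ⟨Q, R', hne, hQ0, hR1, hset⟩
      · rw [hset] at hRnbr
        rw [Set.mem_singleton_iff] at hRnbr
        subst hRnbr
        rw [hRlab] at hQ0; rw [h1'] at hQ0; omega
      · rw [hset] at hRnbr
        rcases hRnbr with rfl | rfl
        · rw [hRlab] at hQ0; rw [h1'] at hQ0; omega
        · rw [hRlab] at hR1; rw [h1'] at hR1; omega
    · -- P not involved in the last attach: commute
      have hsets : {x : ℕ | s(P, x) ∈ insert s(P₀, R) E'} = {x : ℕ | s(P, x) ∈ E'} := by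
        ext x
        simp only [Set.mem_setOf_eq, Finset.mem_insert, Sym2.eq_iff]
        constructor
        · rintro ((⟨ha, hb⟩ | ⟨ha, hb⟩) | hx)
          · exact absurd ha.symm hPP₀
          · exact absurd ha hPR
          · exact hx
        · exact fun hx => Or.inr hx
      have hold : (∃ Q, l' Q = 0 ∧ {x : ℕ | s(P, x) ∈ E'} = {Q}) ∨
          (∃ Q R', Q ≠ R' ∧ l' Q = 0 ∧ l' R' = 1 ∧ {x : ℕ | s(P, x) ∈ E'} = {Q, R'}) := by
        rcases hc with ⟨Q, hQ0, hset⟩ | ⟨Q, R', hne, hQ0, hR1, hset⟩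
        · have hQmem : s(P, Q) ∈ E' := by
            have : Q ∈ {x : ℕ | s(P, x) ∈ E'} := by
              rw [← hsets, hset]; exact Set.mem_singleton Q
            exact this
          have hQR : Q ≠ R := fun hh => hR (hh ▸ (hspec P Q hQmem).2.1)
          exact Or.inl ⟨Q, by rwa [Function.update_of_ne hQR] at hQ0, by rw [← hsets, hset]⟩
        · have hQmem : s(P, Q) ∈ E' := by
            have : Q ∈ {x : ℕ | s(P, x) ∈ E'} := by
              rw [← hsets, hset]; exact Set.mem_insert Q {R'}
            exact this
          have hR'mem : s(P, R') ∈ E' := by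
            have : R' ∈ {x : ℕ | s(P, x) ∈ E'} := by
              rw [← hsets, hset]; exact Set.mem_insert_of_mem Q rfl
            exact this
          have hQR : Q ≠ R := fun hh => hR (hh ▸ (hspec P Q hQmem).2.1)
          have hR'R : R' ≠ R := fun hh => hR (hh ▸ (hspec P R' hR'mem).2.1)
          exact Or.inr ⟨Q, R', hne, by rwa [Function.update_of_ne hQR] at hQ0,
            by rwa [Function.update_of_ne hR'R] at hR1, by rw [← hsets, hset]⟩
      exact isfinal_lift_attach (ih P hPV' h1' hold) hP₀ hPP₀ hR (Ne.symm hPR)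
  | @subdivide V' E' l' P₀ Q₀ R ht hPQ hR ih =>
    intro P hP h1 hc
    have hspec := ktree_edge_spec ht
    obtain ⟨hP₀V, hQ₀V, hP₀Q₀⟩ := hspec P₀ Q₀ hPQ
    have hmul := ktree_edge_mul ht P₀ Q₀ hPQ
    have hP₀R : P₀ ≠ R := fun hh => hR (hh ▸ hP₀V)
    have hQ₀R : Q₀ ≠ R := fun hh => hR (hh ▸ hQ₀V)
    by_cases hPR : P = R
    · subst hPR; exact ⟨V', E', l', ht, hR, Or.inr ⟨P₀, Q₀, hPQ, rfl, rfl, rfl⟩⟩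
    have hPV' : P ∈ V' := by
      rcases Finset.mem_insert.1 hP with h | h
      · exact absurd h hPR
      · exact h
    have h1' : l' P = 1 := by rwa [Function.update_of_ne hPR] at h1
    by_cases hPP₀ : P = P₀
    · exfalso
      subst hPP₀
      -- R is a neighbor of P with label l' P + l' Q₀ = 1 + l' Q₀
      have hRnbr : R ∈ {x : ℕ |
          s(P, x) ∈ insert s(P, R) (insert s(R, Q₀) (E'.erase s(P, Q₀)))} := by
        simp [Set.mem_setOf_eq]
      have hRlab : Function.update l' R (l' P + l' Q₀) R = 1 + l' Q₀ := by
        rw [Function.update_self, h1']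
      have hQ₀nonneg : 0 ≤ l' Q₀ := by rw [h1'] at hmul; omega
      rcases hc with ⟨Q, hQ0, hset⟩ | ⟨Q, R', hne, hQ0, hR1, hset⟩
      · rw [hset, Set.mem_singleton_iff] at hRnbr
        subst hRnbr
        rw [hRlab] at hQ0; omega
      · rw [hset] at hRnbr
        rcases hRnbr with rfl | rfl
        · rw [hRlab] at hQ0; omega
        · -- R' = R, so l' Q₀ = 0; Q is another 0-neighbor of P distinct from Q₀
          rw [hRlab] at hR1
          have hQ₀0 : l' Q₀ = 0 := by omega
          have hQnbr : Q ∈ ({Q, R} : Set ℕ) := Set.mem_insert Q {R}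
          rw [← hset] at hQnbr
          have hQmem : s(P, Q) ∈ insert s(P, R) (insert s(R, Q₀) (E'.erase s(P, Q₀))) := hQnbr
          have hQE' : s(P, Q) ∈ E' ∧ Q ≠ Q₀ := by
            rcases Finset.mem_insert.1 hQmem with hx | hx
            · rw [Sym2.eq_iff] at hx
              rcases hx with ⟨-, rfl⟩ | ⟨rfl, -⟩
              · exact absurd rfl hne
              · exact absurd rfl hP₀R
            rcases Finset.mem_insert.1 hx with hx | hx
            · rw [Sym2.eq_iff] at hx
              rcases hx with ⟨rfl, -⟩ | ⟨-, rfl⟩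
              · exact absurd rfl hP₀R
              · exact absurd rfl hne
            · obtain ⟨hne', hmem'⟩ := Finset.mem_erase.1 hx
              refine ⟨hmem', fun hh => hne' ?_⟩
              rw [hh]
          have hQR : Q ≠ R := hne
          have hQ0' : l' Q = 0 := by rwa [Function.update_of_ne hQR] at hQ0
          exact hQE'.2 (ktree_zero_nbr ht P Q Q₀ h1' hQE'.1 hPQ hQ0' hQ₀0)
    by_cases hPQ₀ : P = Q₀
    · exfalso
      subst hPQ₀
      have hRnbr : R ∈ {x : ℕ |
          s(P, x) ∈ insert s(P₀, R) (insert s(R, P) (E'.erase s(P₀, P)))} := by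
        simp [Set.mem_setOf_eq, Sym2.eq_swap]
      have hRlab : Function.update l' R (l' P₀ + l' P) R = l' P₀ + 1 := by
        rw [Function.update_self, h1']
      have hP₀nonneg : 0 ≤ l' P₀ := by rw [h1'] at hmul; nlinarith
      rcases hc with ⟨Q, hQ0, hset⟩ | ⟨Q, R', hne, hQ0, hR1, hset⟩
      · rw [hset, Set.mem_singleton_iff] at hRnbr
        subst hRnbr
        rw [hRlab] at hQ0; omega
      · rw [hset] at hRnbr
        rcases hRnbr with rfl | rfl
        · rw [hRlab] at hQ0; omega
        · rw [hRlab] at hR1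
          have hP₀0 : l' P₀ = 0 := by omega
          have hQnbr : Q ∈ ({Q, R} : Set ℕ) := Set.mem_insert Q {R}
          rw [← hset] at hQnbr
          have hQmem : s(P, Q) ∈ insert s(P₀, R) (insert s(R, P) (E'.erase s(P₀, P))) := hQnbr
          have hPnP₀ : P ≠ P₀ := fun hh => hP₀Q₀ hh.symm
          have hQE' : s(P, Q) ∈ E' ∧ Q ≠ P₀ := by
            rcases Finset.mem_insert.1 hQmem with hx | hx
            · rw [Sym2.eq_iff] at hx
              rcases hx with ⟨ha, -⟩ | ⟨ha, -⟩
              · exact absurd ha hPnP₀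
              · exact absurd ha hPR
            rcases Finset.mem_insert.1 hx with hx | hx
            · rw [Sym2.eq_iff] at hx
              rcases hx with ⟨ha, -⟩ | ⟨-, hb⟩
              · exact absurd ha hPR
              · exact absurd hb hne
            · obtain ⟨hne', hmem'⟩ := Finset.mem_erase.1 hx
              refine ⟨hmem', fun hh => hne' ?_⟩
              rw [hh, Sym2.eq_swap]
          have hP₀edge : s(P, P₀) ∈ E' := by rw [Sym2.eq_swap]; exact hPQ
          have hQ0' : l' Q = 0 := by rwa [Function.update_of_ne hne] at hQ0
          exact hQE'.2 (ktree_zero_nbr ht P Q P₀ h1' hQE'.1 hP₀edge hQ0' hP₀0)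
    · -- P is not involved in the last subdivision: commute
      have hsets : {x : ℕ |
          s(P, x) ∈ insert s(P₀, R) (insert s(R, Q₀) (E'.erase s(P₀, Q₀)))} =
          {x : ℕ | s(P, x) ∈ E'} := by
        ext x
        simp only [Set.mem_setOf_eq, Finset.mem_insert, Finset.mem_erase, Sym2.eq_iff]
        constructor
        · rintro ((⟨ha, hb⟩ | ⟨ha, hb⟩) | (⟨ha, hb⟩ | ⟨ha, hb⟩) | ⟨-, hx⟩)
          · exact absurd ha hPP₀
          · exact absurd ha hPR
          · exact absurd ha hPR
          · exact absurd ha hPQ₀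
          · exact hx
        · intro hx
          refine Or.inr (Or.inr ⟨fun hh => ?_, hx⟩)
          rw [Sym2.eq_iff] at hh
          rcases hh with ⟨ha, -⟩ | ⟨ha, -⟩
          · exact hPP₀ ha
          · exact hPQ₀ ha
      have hold : (∃ Q, l' Q = 0 ∧ {x : ℕ | s(P, x) ∈ E'} = {Q}) ∨
          (∃ Q R', Q ≠ R' ∧ l' Q = 0 ∧ l' R' = 1 ∧ {x : ℕ | s(P, x) ∈ E'} = {Q, R'}) := by
        rcases hc with ⟨Q, hQ0, hset⟩ | ⟨Q, R', hne, hQ0, hR1, hset⟩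
        · have hQmem : s(P, Q) ∈ E' := by
            have : Q ∈ {x : ℕ | s(P, x) ∈ E'} := by
              rw [← hsets, hset]; exact Set.mem_singleton Q
            exact this
          have hQR : Q ≠ R := fun hh => hR (hh ▸ (hspec P Q hQmem).2.1)
          exact Or.inl ⟨Q, by rwa [Function.update_of_ne hQR] at hQ0, by rw [← hsets, hset]⟩
        · have hQmem : s(P, Q) ∈ E' := by
            have : Q ∈ {x : ℕ | s(P, x) ∈ E'} := by
              rw [← hsets, hset]; exact Set.mem_insert Q {R'}
            exact this
          have hR'mem : s(P, R') ∈ E' := by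
            have : R' ∈ {x : ℕ | s(P, x) ∈ E'} := by
              rw [← hsets, hset]; exact Set.mem_insert_of_mem Q rfl
            exact this
          have hQR : Q ≠ R := fun hh => hR (hh ▸ (hspec P Q hQmem).2.1)
          have hR'R : R' ≠ R := fun hh => hR (hh ▸ (hspec P R' hR'mem).2.1)
          exact Or.inr ⟨Q, R', hne, by rwa [Function.update_of_ne hQR] at hQ0,
            by rwa [Function.update_of_ne hR'R] at hR1, by rw [← hsets, hset]⟩
      exact isfinal_lift_subdivide (ih P hPV' h1' hold) hPQ hPP₀ hPQ₀ hR (Ne.symm hPR)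


/-- Proposition 2.10: a vertex with label `1` is final if and only if either it
has exactly one neighbor, with label `0`, or exactly two neighbors, with labels
`1` and `0`. -/
theorem ktree_label_one_final_iff {V : Finset ℕ} {E : Finset (Sym2 ℕ)} {l : ℕ → ℤ}
    (h : KTree V E l) (P : ℕ) (hP : P ∈ V) (h1 : l P = 1) :
    IsFinal V E l P ↔
      ((∃ Q, l Q = 0 ∧ {x : ℕ | s(P, x) ∈ E} = {Q}) ∨
       (∃ Q R, Q ≠ R ∧ l Q = 0 ∧ l R = 1 ∧
          {x : ℕ | s(P, x) ∈ E} = {Q, R})) := by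
  constructor
  · rintro ⟨V', E', l', ht, hPV', hcase⟩
    have hspec := ktree_edge_spec ht
    rcases hcase with ⟨A, hA, hV, hE, hl⟩ | ⟨A, B, hAB, hV, hE, hl⟩
    · subst hV hE hl
      have hAP : A ≠ P := fun hh => hPV' (hh ▸ hA)
      rw [Function.update_self] at h1
      left
      refine ⟨A, ?_, ?_⟩
      · rw [Function.update_of_ne hAP]; omega
      · ext x
        simp only [Set.mem_setOf_eq, Finset.mem_insert, Set.mem_singleton_iff, Sym2.eq_iff]
        constructor
        · rintro ((⟨ha, hb⟩ | ⟨-, hb⟩) | hx)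
          · exact absurd ha.symm hAP
          · exact hb
          · exact absurd (hspec P x hx).1 hPV'
        · rintro rfl
          tauto
    · subst hV hE hl
      obtain ⟨hAV, hBV, hABne⟩ := hspec A B hAB
      have hmul := ktree_edge_mul ht A B hAB
      have hAP : A ≠ P := fun hh => hPV' (hh ▸ hAV)
      have hBP : B ≠ P := fun hh => hPV' (hh ▸ hBV)
      rw [Function.update_self] at h1
      have h0A : 0 ≤ l' A := by nlinarith [mul_self_nonneg (l' A)]
      have h0B : 0 ≤ l' B := by nlinarith [mul_self_nonneg (l' B)]
      have hset : {x : ℕ | s(P, x) ∈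
          insert s(A, P) (insert s(P, B) (E'.erase s(A, B)))} = {A, B} := by
        ext x
        simp only [Set.mem_setOf_eq, Finset.mem_insert, Finset.mem_erase, Sym2.eq_iff,
          Set.mem_insert_iff, Set.mem_singleton_iff]
        constructor
        · rintro ((⟨ha, -⟩ | ⟨-, hb⟩) | (⟨-, hb⟩ | ⟨ha, -⟩) | ⟨-, hx⟩)
          · exact absurd ha.symm hAP
          · exact Or.inl hb
          · exact Or.inr hb
          · exact absurd ha.symm hBP
          · exact absurd (hspec P x hx).1 hPV'
        · rintro (rfl | rfl)
          · tauto
          · tauto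
      right
      rcases (by omega : l' A = 0 ∧ l' B = 1 ∨ l' A = 1 ∧ l' B = 0) with ⟨hA0, hB1⟩ | ⟨hA1, hB0⟩
      · exact ⟨A, B, hABne, by rw [Function.update_of_ne hAP]; exact hA0,
          by rw [Function.update_of_ne hBP]; exact hB1, hset⟩
      · exact ⟨B, A, hABne.symm, by rw [Function.update_of_ne hBP]; exact hB0,
          by rw [Function.update_of_ne hAP]; exact hA1, by rw [hset, Set.pair_comm]⟩
  · exact ktree_backward h P hP h1
end
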